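/- arXiv:2403.02843 — 7 statements merged into one kernel-verified Lean document; each statement's English description precedes it below -/
import Mathlib

section
/- Every generalized hyperbolic continuous linear operator T on a locally convex space X has the finite shadowing property. -/
open Filter Topology Set

/-- `T` is a generalized hyperbolic operator on the locally convex space `X`, whose topology is
induced by the family of seminorms `p`: there is a topological direct sum decomposition
`X = M ⊕ N` (the canonical projection onto `M` along `N` is continuous) such that
(GH1) `T(M) ⊆ M`; (GH2) `N ⊆ T(N)` and `T|_N : N → T(N)` is an isomorphism of topological
vector spaces (i.e. `T` is injective on `N` and admits a continuous inverse `S` on `T(N)`);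
(GH3) for every `α` there are `β`, `c > 0`, `t ∈ (0,1)` with `pα (Tⁿ y) ≤ c tⁿ pβ y` and
`pα (Sⁿ z) ≤ c tⁿ pβ z` for all `y ∈ M`, `z ∈ N`, `n ∈ ℕ`. -/
def IsGeneralizedHyperbolic {𝕂 : Type*} [RCLike 𝕂] {X : Type*} [AddCommGroup X] [Module 𝕂 X]
    [TopologicalSpace X] {I : Type*} (p : I → Seminorm 𝕂 X) (T : X →L[𝕂] X) : Prop :=
  ∃ (M N : Submodule 𝕂 X) (hMN : IsCompl M N),
    Continuous (fun x : X => (M.linearProjOfIsCompl N hMN x : X)) ∧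
    (∀ y ∈ M, T y ∈ M) ∧
    (N : Set X) ⊆ ⇑T '' (N : Set X) ∧
    Set.InjOn ⇑T (N : Set X) ∧
    ∃ S : X → X,
      (∀ z ∈ ⇑T '' (N : Set X), S z ∈ N ∧ T (S z) = z) ∧
      ContinuousOn S (⇑T '' (N : Set X)) ∧
      ∀ α : I, ∃ β : I, ∃ c > (0 : ℝ), ∃ t ∈ Set.Ioo (0 : ℝ) 1,
        (∀ y ∈ M, ∀ n : ℕ, p α ((⇑T)^[n] y) ≤ c * t ^ n * p β y) ∧
        (∀ z ∈ N, ∀ n : ℕ, p α (S^[n] z) ≤ c * t ^ n * p β z)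

/-- `T` has the finite shadowing property: for every neighborhood `V` of `0` there is a
neighborhood `U` of `0` such that every `U`-chain `(x_j)_{j=0}^k` for `T` is `V`-shadowed by
the trajectory of some point `y`. -/
def FiniteShadowingProperty {X : Type*} [AddCommGroup X] [TopologicalSpace X]
    (T : X → X) : Prop :=
  ∀ V ∈ 𝓝 (0 : X), ∃ U ∈ 𝓝 (0 : X), ∀ (k : ℕ), 1 ≤ k → ∀ x : ℕ → X,
    (∀ j < k, T (x j) - x (j + 1) ∈ U) →
    ∃ y : X, ∀ j ≤ k, x j - T^[j] y ∈ V

/-!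
Split every error `e_j = T x_j - x_{j+1}` of the chain along `X = M ⊕ N` as `v_j + w_j`.
The point `y = x_0 - ∑_{i<k} S^{i+1} w_i` satisfies
`x_j - T^j y = ∑_{j ≤ i < k} S^{i+1-j} w_i - ∑_{i<j} T^{j-1-i} v_i`:
the stable parts of the errors are pushed forward by `T`, the unstable parts are pulled back
by `S`, and both act as contractions by (GH3). Each sum is therefore dominated by a geometric
series, of size `c δ / (1 - t)` once the components `v_j, w_j` are `δ`-small for `p_β`;
continuity of the projection onto `M` makes this smallness a neighbourhood condition on `e_j`.
-/

open Finset

theorem WithSeminorms.exists_ball_subset_of_directed {𝕜 E ι : Type*} [NormedField 𝕜]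
    [AddCommGroup E] [Module 𝕜 E] [TopologicalSpace E] [Nonempty ι]
    {p : SeminormFamily 𝕜 E ι} (hp : WithSeminorms p) (hdir : Directed (· ≤ ·) p)
    {V : Set E} (hV : V ∈ 𝓝 0) : ∃ i, ∃ ε > 0, (p i).ball 0 ε ⊆ V := by
  obtain ⟨s, ε, hε, hsV⟩ := (hp.mem_nhds_iff 0 V).1 hV
  obtain ⟨i, hi⟩ := hdir.finset_le s
  exact ⟨i, ε, hε, (Seminorm.ball_antitone (Finset.sup_le hi)).trans hsV⟩

theorem Finset.sum_pow_le_of_injOn {ι : Type*} {s : Finset ι} {n : ι → ℕ}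
    (hn : InjOn n s) {t : ℝ} (ht0 : 0 ≤ t) (ht1 : t < 1) :
    ∑ i ∈ s, t ^ n i ≤ (1 - t)⁻¹ := by
  classical
  rw [← sum_image (f := (t ^ ·)) hn, ← tsum_geometric_of_lt_one ht0 ht1]
  exact (summable_geometric_of_lt_one ht0 ht1).sum_le_tsum _ fun _ _ => pow_nonneg ht0 _

theorem Seminorm.map_sum_le_of_le_geometric {𝕜 X ι : Type*} [SeminormedRing 𝕜]
    [AddCommGroup X] [Module 𝕜 X] (q : Seminorm 𝕜 X) {s : Finset ι} {f : ι → X} {n : ι → ℕ}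
    (hn : InjOn n s) {C t : ℝ} (hC : 0 ≤ C) (ht0 : 0 ≤ t) (ht1 : t < 1)
    (hf : ∀ i ∈ s, q (f i) ≤ C * t ^ n i) :
    q (∑ i ∈ s, f i) ≤ C * (1 - t)⁻¹ :=
  calc q (∑ i ∈ s, f i)
      ≤ ∑ i ∈ s, q (f i) := le_sum_of_subadditive q (map_zero q).le (map_add_le_add q) s f
    _ ≤ ∑ i ∈ s, C * t ^ n i := sum_le_sum hf
    _ = C * ∑ i ∈ s, t ^ n i := (mul_sum s _ C).symm
    _ ≤ C * (1 - t)⁻¹ := mul_le_mul_of_nonneg_left (sum_pow_le_of_injOn hn ht0 ht1) hC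

section Chain

variable {X F : Type*} [AddCommGroup X] [FunLike F X X] [AddMonoidHomClass F X X]

theorem sub_iterate_eq_of_chain (T : F) {S : X → X} {N : Set X} (hSN : MapsTo S N N)
    (hTS : ∀ z ∈ N, T (S z) = z) {x v w : ℕ → X} (he : ∀ j, T (x j) - x (j + 1) = v j + w j)
    (hw : ∀ j, w j ∈ N) {j k : ℕ} (hjk : j ≤ k) :
    x j - T^[j] (x 0 - ∑ i ∈ range k, S^[i + 1] (w i)) =
      ∑ i ∈ Ico j k, S^[i + 1 - j] (w i) - ∑ i ∈ range j, T^[j - 1 - i] (v i) := by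
  induction j with
  | zero =>
    rw [Finset.range_zero, Finset.sum_empty, sub_zero, Function.iterate_zero_apply, sub_sub_cancel,
      Finset.range_eq_Ico]
    rfl
  | succ j ih =>
    have hjk : j < k := hjk
    have hpush : T (∑ i ∈ range j, T^[j - 1 - i] (v i)) + v j =
        ∑ i ∈ range (j + 1), T^[j + 1 - 1 - i] (v i) := by
      rw [sum_range_succ, map_sum, Nat.add_sub_cancel, Nat.sub_self, Function.iterate_zero_apply]
      congr 1
      refine sum_congr rfl fun i hi => ?_
      rw [← Function.iterate_succ_apply' T, show j - i = j - 1 - i + 1 by grind]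
    have hpull : T (∑ i ∈ Ico j k, S^[i + 1 - j] (w i)) =
        w j + ∑ i ∈ Ico (j + 1) k, S^[i + 1 - (j + 1)] (w i) := by
      rw [← Finset.insert_Ico_add_one_left_eq_Ico hjk, sum_insert (by simp), map_add, map_sum,
        Nat.add_sub_cancel_left, Function.iterate_one, hTS _ (hw j)]
      congr 1
      refine sum_congr rfl fun i hi => ?_
      rw [show i + 1 - j = i + 1 - (j + 1) + 1 by grind, Function.iterate_succ_apply',
        hTS _ (hSN.iterate _ (hw i))]
    calc x (j + 1) - T^[j + 1] (x 0 - ∑ i ∈ range k, S^[i + 1] (w i))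
        = T (x j - T^[j] (x 0 - ∑ i ∈ range k, S^[i + 1] (w i))) - (v j + w j) := by
          rw [← he j, map_sub, Function.iterate_succ_apply']
          abel
      _ = _ := by
          rw [ih hjk.le, map_sub, hpull, ← hpush]
          abel

variable {𝕜 : Type*} [SeminormedRing 𝕜] [Module 𝕜 X]

theorem exists_seminorm_sub_iterate_le_of_chain (q q' : Seminorm 𝕜 X) (T : F) {S : X → X}
    {M N : Set X} (hSN : MapsTo S N N) (hTS : ∀ z ∈ N, T (S z) = z) {c t δ : ℝ} (hc : 0 ≤ c)
    (hδ : 0 ≤ δ) (ht0 : 0 ≤ t) (ht1 : t < 1)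
    (hTdecay : ∀ y ∈ M, ∀ n : ℕ, q (T^[n] y) ≤ c * t ^ n * q' y)
    (hSdecay : ∀ z ∈ N, ∀ n : ℕ, q (S^[n] z) ≤ c * t ^ n * q' z)
    {x v w : ℕ → X} (he : ∀ j, T (x j) - x (j + 1) = v j + w j) (hv : ∀ j, v j ∈ M)
    (hw : ∀ j, w j ∈ N) {k : ℕ} (hvδ : ∀ j < k, q' (v j) ≤ δ) (hwδ : ∀ j < k, q' (w j) ≤ δ) :
    ∃ y, ∀ j ≤ k, q (x j - T^[j] y) ≤ 2 * c * δ / (1 - t) := by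
  refine ⟨x 0 - ∑ i ∈ range k, S^[i + 1] (w i), fun j hjk => ?_⟩
  have hcδ : 0 ≤ c * δ := mul_nonneg hc hδ
  have hpull : q (∑ i ∈ Ico j k, S^[i + 1 - j] (w i)) ≤ c * δ * (1 - t)⁻¹ := by
    refine q.map_sum_le_of_le_geometric (n := fun i => i + 1 - j) (fun a ha b hb h => ?_) hcδ
      ht0 ht1 fun i hi => ?_
    · grind [Finset.coe_Ico]
    · have hik : i < k := (mem_Ico.1 hi).2
      calc q (S^[i + 1 - j] (w i)) ≤ c * t ^ (i + 1 - j) * q' (w i) := hSdecay _ (hw i) _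
        _ ≤ c * t ^ (i + 1 - j) * δ := by gcongr; exact hwδ i hik
        _ = c * δ * t ^ (i + 1 - j) := by ring
  have hpush : q (∑ i ∈ range j, T^[j - 1 - i] (v i)) ≤ c * δ * (1 - t)⁻¹ := by
    refine q.map_sum_le_of_le_geometric (n := fun i => j - 1 - i) (fun a ha b hb h => ?_) hcδ
      ht0 ht1 fun i hi => ?_
    · grind [Finset.coe_range]
    · have hik : i < k := (mem_range.1 hi).trans_le hjk
      calc q (T^[j - 1 - i] (v i)) ≤ c * t ^ (j - 1 - i) * q' (v i) := hTdecay _ (hv i) _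
        _ ≤ c * t ^ (j - 1 - i) * δ := by gcongr; exact hvδ i hik
        _ = c * δ * t ^ (j - 1 - i) := by ring
  rw [sub_iterate_eq_of_chain T hSN hTS he hw hjk]
  calc _ ≤ _ := map_sub_le_add q _ _
    _ ≤ c * δ * (1 - t)⁻¹ + c * δ * (1 - t)⁻¹ := add_le_add hpull hpush
    _ = 2 * c * δ / (1 - t) := by ring

end Chain

theorem generalizedHyperbolic_finiteShadowing_general
    {𝕂 : Type*} [RCLike 𝕂] {X : Type*} [AddCommGroup X] [Module 𝕂 X]
    [TopologicalSpace X] [IsTopologicalAddGroup X]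
    {I : Type*} [Nonempty I] (p : I → Seminorm 𝕂 X) (hp : WithSeminorms p)
    (hdir : ∀ α β : I, ∃ γ : I, p α ≤ p γ ∧ p β ≤ p γ)
    (T : X →L[𝕂] X) (hT : IsGeneralizedHyperbolic p T) :
    FiniteShadowingProperty (⇑T) := by
  obtain ⟨M, N, hMN, hP, -, hNT, -, S, hS, -, hGH3⟩ := hT
  have hP : Continuous (M.projection N hMN) := hP
  have hQ : Continuous (N.projection M hMN.symm) := by
    rw [Submodule.projection_eq_id_sub_projection hMN]
    exact continuous_id.sub hP
  intro V hV
  obtain ⟨α, ε, hε, hαV⟩ := hp.exists_ball_subset_of_directed hdir hV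
  obtain ⟨β, c, hc, t, ⟨ht0, ht1⟩, hTdecay, hSdecay⟩ := hGH3 α
  obtain ⟨δ, hδ, hδε⟩ : ∃ δ > 0, 2 * c * δ / (1 - t) < ε := by
    have := sub_pos.2 ht1
    exact ⟨ε * (1 - t) / (4 * c), by positivity, by field_simp; linarith⟩
  have hβ : (p β).ball 0 δ ∈ 𝓝 0 := (p β).ball_mem_nhds (hp.continuous_seminorm β) hδ
  refine ⟨M.projection N hMN ⁻¹' (p β).ball 0 δ ∩ N.projection M hMN.symm ⁻¹' (p β).ball 0 δ,
    inter_mem (hP.tendsto' 0 0 (map_zero _) hβ) (hQ.tendsto' 0 0 (map_zero _) hβ),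
    fun k _ x hx => ?_⟩
  obtain ⟨y, hy⟩ := exists_seminorm_sub_iterate_le_of_chain (p α) (p β) T
    (fun z hz => (hS z (hNT hz)).1) (fun z hz => (hS z (hNT hz)).2) hc.le hδ.le ht0.le ht1
    hTdecay hSdecay (fun _ => (Submodule.projection_add_projection_eq_self hMN _).symm)
    (fun _ => Submodule.projection_apply_mem _ _) (fun _ => Submodule.projection_apply_mem _ _)
    (fun j hj => ((p β).mem_ball_zero.1 (hx j hj).1).le)
    (fun j hj => ((p β).mem_ball_zero.1 (hx j hj).2).le)
  exact ⟨y, fun j hj => hαV ((p α).mem_ball_zero.2 ((hy j hj).trans_lt hδε))⟩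

/-- Every generalized hyperbolic operator on a locally convex space has the finite shadowing
property. -/
theorem generalizedHyperbolic_finiteShadowing
    {𝕂 : Type*} [RCLike 𝕂] {X : Type*} [AddCommGroup X] [Module 𝕂 X]
    [TopologicalSpace X] [IsTopologicalAddGroup X] [ContinuousSMul 𝕂 X]
    {I : Type*} [Nonempty I] (p : I → Seminorm 𝕂 X) (hp : WithSeminorms p)
    (hdir : ∀ α β : I, ∃ γ : I, p α ≤ p γ ∧ p β ≤ p γ)
    (T : X →L[𝕂] X) (hT : IsGeneralizedHyperbolic p T) :
    FiniteShadowingProperty (⇑T) :=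
  generalizedHyperbolic_finiteShadowing_general p hp hdir T hT
end

section
/- Let X be a topological vector space over ℝ or ℂ and let T ∈ L(X) have the periodic shadowing property. Then: (a) Per(T) is dense in CR(T); (b) the restriction T|_{CR(T)} (a continuous linear operator on the closed T-invariant subspace CR(T)) has the finite shadowing property and the periodic shadowing property; (c) T|_{CR(T)} is topologically mixing and Devaney chaotic. Moreover, if T has the strict periodic shadowing property, then T|_{CR(T)} has the strict periodic shadowing property. -/
open Filter Topology Set

section Defs

variable {X : Type*} [AddCommGroup X] [TopologicalSpace X]

/-- The set of periodic points of `T`. -/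
def PerSet (T : X → X) : Set X := {x | ∃ k : ℕ, 1 ≤ k ∧ T^[k] x = x}

/-- The chain recurrent set of `T`: `x` is chain recurrent if for every neighborhood `U` of `0`
there is a `U`-chain (a `U`-cycle) for `T` from `x` to itself. -/
def CRSet (T : X → X) : Set X :=
  {x | ∀ U ∈ 𝓝 (0 : X), ∃ k : ℕ, 1 ≤ k ∧ ∃ c : ℕ → X, c 0 = x ∧ c k = x ∧
    ∀ j < k, T (c j) - c (j + 1) ∈ U}

/-- `T` has the periodic shadowing property: every periodic `U`-pseudotrajectory is `V`-shadowed
by some periodic point of `T`. -/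
def PeriodicShadowingProperty (T : X → X) : Prop :=
  ∀ V ∈ 𝓝 (0 : X), ∃ U ∈ 𝓝 (0 : X), ∀ (k : ℕ), 1 ≤ k → ∀ x : ℕ → X,
    (∀ j : ℕ, T (x j) - x (j + 1) ∈ U) → (∀ j : ℕ, x (j + k) = x j) →
    ∃ y ∈ PerSet T, ∀ j : ℕ, x j - T^[j] y ∈ V

/-- `T` has the strict periodic shadowing property: every `U`-pseudotrajectory which is periodic
with period `k` is `V`-shadowed by some point `y` with `T^[k] y = y`. -/
def StrictPeriodicShadowingProperty (T : X → X) : Prop :=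
  ∀ V ∈ 𝓝 (0 : X), ∃ U ∈ 𝓝 (0 : X), ∀ (k : ℕ), 1 ≤ k → ∀ x : ℕ → X,
    (∀ j : ℕ, T (x j) - x (j + 1) ∈ U) → (∀ j : ℕ, x (j + k) = x j) →
    ∃ y : X, T^[k] y = y ∧ ∀ j : ℕ, x j - T^[j] y ∈ V

/-- The restriction of `T` to the (invariant) subspace `Y` has the finite shadowing property,
expressed via relative neighborhoods of `0`. -/
def FiniteShadowingPropertyOn (T : X → X) (Y : Set X) : Prop :=
  ∀ V ∈ 𝓝 (0 : X), ∃ U ∈ 𝓝 (0 : X), ∀ (k : ℕ), 1 ≤ k → ∀ x : ℕ → X,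
    (∀ j ≤ k, x j ∈ Y) → (∀ j < k, T (x j) - x (j + 1) ∈ U) →
    ∃ y ∈ Y, ∀ j ≤ k, x j - T^[j] y ∈ V

/-- The restriction of `T` to the (invariant) subspace `Y` has the periodic shadowing property:
periodic pseudotrajectories lying in `Y` are shadowed by periodic points lying in `Y`. -/
def PeriodicShadowingPropertyOn (T : X → X) (Y : Set X) : Prop :=
  ∀ V ∈ 𝓝 (0 : X), ∃ U ∈ 𝓝 (0 : X), ∀ (k : ℕ), 1 ≤ k → ∀ x : ℕ → X,
    (∀ j : ℕ, x j ∈ Y) →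
    (∀ j : ℕ, T (x j) - x (j + 1) ∈ U) → (∀ j : ℕ, x (j + k) = x j) →
    ∃ y ∈ PerSet T ∩ Y, ∀ j : ℕ, x j - T^[j] y ∈ V

/-- The restriction of `T` to the (invariant) subspace `Y` has the strict periodic shadowing
property. -/
def StrictPeriodicShadowingPropertyOn (T : X → X) (Y : Set X) : Prop :=
  ∀ V ∈ 𝓝 (0 : X), ∃ U ∈ 𝓝 (0 : X), ∀ (k : ℕ), 1 ≤ k → ∀ x : ℕ → X,
    (∀ j : ℕ, x j ∈ Y) →
    (∀ j : ℕ, T (x j) - x (j + 1) ∈ U) → (∀ j : ℕ, x (j + k) = x j) →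
    ∃ y ∈ Y, T^[k] y = y ∧ ∀ j : ℕ, x j - T^[j] y ∈ V

/-- The restriction of `T` to `Y` is topologically transitive (for the subspace topology on
`Y`): relatively open nonempty subsets of `Y` are of the form `A ∩ Y`, `A` open in `X`. -/
def TopologicallyTransitiveOn (T : X → X) (Y : Set X) : Prop :=
  ∀ A B : Set X, IsOpen A → IsOpen B → (A ∩ Y).Nonempty → (B ∩ Y).Nonempty →
    ∃ n : ℕ, ∃ x ∈ A ∩ Y, T^[n] x ∈ B

/-- The restriction of `T` to `Y` is topologically mixing (for the subspace topology on `Y`). -/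
def TopologicallyMixingOn (T : X → X) (Y : Set X) : Prop :=
  ∀ A B : Set X, IsOpen A → IsOpen B → (A ∩ Y).Nonempty → (B ∩ Y).Nonempty →
    ∃ n₀ : ℕ, ∀ n ≥ n₀, ∃ x ∈ A ∩ Y, T^[n] x ∈ B

/-- The restriction of `T` to `Y` is Devaney chaotic: it is topologically transitive and its
set of periodic points (namely `Per(T) ∩ Y`) is dense in `Y`. -/
def DevaneyChaoticOn (T : X → X) (Y : Set X) : Prop :=
  TopologicallyTransitiveOn T Y ∧ Y ⊆ closure (PerSet T ∩ Y)

end Defs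

/-!
Every chain recurrent point `x` of a linear operator can be joined to `0`, and `0` back to `x`,
by `U`-chains: rescaling a `U`-cycle through `x` by `m / M` and letting its endpoint jump by
`x / M`, which is small for large `M`, walks from `x` down to the fixed point `0` (or up from it)
in `M` steps. Padding with the trivial chain at `0`, any two chain recurrent points are joined by
`U`-chains of every sufficiently large length. Hence every chain inside `CR(T)`, and every pair of
points of `CR(T)`, sits on a `U`-cycle, i.e. on a periodic pseudotrajectory, and periodic
shadowing traces it by a periodic point. This gives density of periodic points, finite shadowing
and mixing at once.
-/

open scoped Pointwise

section Chains

variable {X : Type*} [AddCommGroup X] {T : X → X} {U V : Set X} {m n : ℕ} {x y z : X}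

/-- The `U`-chains `(c j)_{j ≤ n}` of the paper, as sequences on `ℕ` whose tail is ignored. -/
def IsPseudoOrbit (T : X → X) (U : Set X) (n : ℕ) (c : ℕ → X) : Prop :=
  ∀ j < n, T (c j) - c (j + 1) ∈ U

def HasChain (T : X → X) (U : Set X) (n : ℕ) (x y : X) : Prop :=
  ∃ c : ℕ → X, c 0 = x ∧ c n = y ∧ IsPseudoOrbit T U n c

theorem IsPseudoOrbit.append {c d : ℕ → X} (hc : IsPseudoOrbit T U m c)
    (hd : IsPseudoOrbit T U n d) (hcd : c m = d 0) :
    IsPseudoOrbit T U (m + n) (fun j => if j ≤ m then c j else d (j - m)) := by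
  intro j hj
  by_cases hjm : j < m
  · simpa only [if_pos hjm.le, if_pos (Nat.succ_le_of_lt hjm)] using hc j hjm
  have hj : (if j ≤ m then c j else d (j - m)) = d (j - m) := by
    split_ifs with h
    · rw [show j = m by omega, Nat.sub_self, hcd]
    · rfl
  simp only [hj, if_neg (show ¬j + 1 ≤ m by omega), show j + 1 - m = j - m + 1 by omega]
  exact hd _ (by omega)

theorem IsPseudoOrbit.mod {c : ℕ → X} (hc : IsPseudoOrbit T U n c) (hn : n ≠ 0)
    (hcn : c n = c 0) (j : ℕ) : T (c (j % n)) - c ((j + 1) % n) ∈ U := by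
  have hjn := Nat.mod_lt j (Nat.pos_of_ne_zero hn)
  rw [← Nat.mod_add_mod j n 1]
  by_cases h : j % n + 1 = n
  · simpa only [h, Nat.mod_self, hcn] using hc _ hjn
  · rw [Nat.mod_eq_of_lt (show j % n + 1 < n by omega)]
    exact hc _ hjn

theorem HasChain.mono (h : HasChain T U n x y) (hUV : U ⊆ V) : HasChain T V n x y :=
  let ⟨c, hc0, hcn, hc⟩ := h
  ⟨c, hc0, hcn, fun j hj => hUV (hc j hj)⟩

theorem HasChain.trans (hxy : HasChain T U m x y) (hyz : HasChain T U n y z) :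
    HasChain T U (m + n) x z := by
  obtain ⟨c, hc0, hcm, hc⟩ := hxy
  obtain ⟨d, hd0, hdn, hd⟩ := hyz
  refine ⟨_, by simpa only [zero_le, if_true] using hc0, ?_, hc.append hd (hcm.trans hd0.symm)⟩
  split_ifs with h
  · rw [show n = 0 by omega] at hdn ⊢
    rw [add_zero, hcm, ← hd0, hdn]
  · rw [Nat.add_sub_cancel_left, hdn]

theorem hasChain_mul_of_forall_succ {p : ℕ → X} (M : ℕ)
    (h : ∀ i < M, HasChain T U n (p i) (p (i + 1))) : HasChain T U (M * n) (p 0) (p M) := by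
  induction M with
  | zero => exact ⟨fun _ => p 0, rfl, rfl, fun j hj => by simp at hj⟩
  | succ M ih =>
    rw [Nat.succ_mul]
    exact (ih fun i hi => h i (by omega)).trans (h M M.lt_succ_self)

theorem hasChain_iterate (hU : (0 : X) ∈ U) (x : X) (n : ℕ) : HasChain T U n x (T^[n] x) :=
  ⟨fun j => T^[j] x, rfl, rfl, fun j _ => by
    show T (T^[j] x) - T^[j + 1] x ∈ U
    rw [Function.iterate_succ_apply', sub_self]
    exact hU⟩

theorem HasChain.replace_end (h : HasChain T U n x y) (hn : n ≠ 0) (hV : (0 : X) ∈ V)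
    (hyz : y - z ∈ V) : HasChain T (U + V) n x z := by
  obtain ⟨c, hc0, hcn, hc⟩ := h
  refine ⟨Function.update c n z, by rwa [Function.update_of_ne hn.symm], by simp,
    fun j hj => ?_⟩
  rw [Function.update_of_ne hj.ne, ← sub_add_sub_cancel _ (c (j + 1))]
  refine add_mem_add (hc j hj) ?_
  by_cases hjn : j + 1 = n
  · rwa [hjn, Function.update_self, hcn]
  · rwa [Function.update_of_ne hjn, sub_self]

theorem HasChain.replace_start (h : HasChain T U n x y) (hn : n ≠ 0) (hV : (0 : X) ∈ V)
    (hzx : T z - T x ∈ V) : HasChain T (V + U) n z y := by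
  obtain ⟨c, hc0, hcn, hc⟩ := h
  refine ⟨Function.update c 0 z, by simp, by rwa [Function.update_of_ne hn], fun j hj => ?_⟩
  rw [Function.update_of_ne j.succ_ne_zero, ← sub_add_sub_cancel _ (T (c j))]
  refine add_mem_add ?_ (hc j hj)
  by_cases hj0 : j = 0
  · rwa [hj0, Function.update_self, hc0]
  · rwa [Function.update_of_ne hj0, sub_self]

end Chains

theorem TopologicallyMixingOn.topologicallyTransitiveOn {X : Type*} [TopologicalSpace X]
    {T : X → X} {Y : Set X} (h : TopologicallyMixingOn T Y) : TopologicallyTransitiveOn T Y := by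
  intro A B hA hB hAY hBY
  obtain ⟨n₀, hn₀⟩ := h A B hA hB hAY hBY
  exact ⟨n₀, hn₀ n₀ le_rfl⟩

section Shadowing

variable {X : Type*} [AddCommGroup X] [TopologicalSpace X] {T : X → X} {V : Set X}

theorem perSet_subset_crSet (T : X → X) : PerSet T ⊆ CRSet T := by
  rintro y ⟨k, hk, hy⟩ U hU
  have hchain := hasChain_iterate (T := T) (mem_of_mem_nhds hU) y k
  rw [hy] at hchain
  exact ⟨k, hk, hchain⟩

theorem PeriodicShadowingProperty.exists_shadow (hT : PeriodicShadowingProperty T)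
    (hV : V ∈ 𝓝 (0 : X)) :
    ∃ U ∈ 𝓝 (0 : X), ∀ (k n : ℕ) (c : ℕ → X), n ≠ 0 → IsPseudoOrbit T U k c →
      HasChain T U n (c k) (c 0) → ∃ y ∈ PerSet T, ∀ j ≤ k, c j - T^[j] y ∈ V := by
  obtain ⟨U, hU, hshadow⟩ := hT V hV
  refine ⟨U, hU, fun k n c hn hc ⟨d, hd0, hdn, hd⟩ => ?_⟩
  set e : ℕ → X := fun j => if j ≤ k then c j else d (j - k)
  have he : IsPseudoOrbit T U (k + n) e := hc.append hd hd0.symm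
  have hek : e (k + n) = e 0 := by simp [e, hn, hdn]
  obtain ⟨y, hy, hey⟩ := hshadow (k + n) (by omega) (fun j => e (j % (k + n)))
    (he.mod (by omega) hek) (fun j => by rw [Nat.add_mod_right])
  refine ⟨y, hy, fun j hj => ?_⟩
  simpa [e, Nat.mod_eq_of_lt (show j < k + n by omega), hj] using hey j

theorem PeriodicShadowingProperty.periodicShadowingPropertyOn_crSet
    (hT : PeriodicShadowingProperty T) : PeriodicShadowingPropertyOn T (CRSet T) := by
  intro V hV
  obtain ⟨U, hU, hshadow⟩ := hT V hV
  refine ⟨U, hU, fun k hk x _ hx hper => ?_⟩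
  obtain ⟨y, hy, hxy⟩ := hshadow k hk x hx hper
  exact ⟨y, ⟨hy, perSet_subset_crSet T hy⟩, hxy⟩

theorem StrictPeriodicShadowingProperty.strictPeriodicShadowingPropertyOn_crSet
    (hT : StrictPeriodicShadowingProperty T) :
    StrictPeriodicShadowingPropertyOn T (CRSet T) := by
  intro V hV
  obtain ⟨U, hU, hshadow⟩ := hT V hV
  refine ⟨U, hU, fun k hk x _ hx hper => ?_⟩
  obtain ⟨y, hy, hxy⟩ := hshadow k hk x hx hper
  exact ⟨y, perSet_subset_crSet T ⟨k, hk, hy⟩, hy, hxy⟩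

variable [IsTopologicalAddGroup X]

theorem crSet_subset_closure_perSet (hT : PeriodicShadowingProperty T) :
    CRSet T ⊆ closure (PerSet T) := by
  refine fun x hx => mem_closure_iff_nhds.mpr fun t ht => ?_
  obtain ⟨U, hU, hshadow⟩ :=
    hT.exists_shadow ((continuous_sub_left x).tendsto' 0 x (sub_zero x) ht)
  obtain ⟨n, hn, hxx⟩ := hx U hU
  obtain ⟨y, hy, hxy⟩ := hshadow 0 n (fun _ => x) (by omega) (fun j hj => by simp at hj) hxx
  exact ⟨y, by simpa using hxy 0 le_rfl, hy⟩

theorem isClosed_crSet (hT : Continuous T) : IsClosed (CRSet T) := by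
  refine isClosed_of_closure_subset fun x hx U hU => ?_
  obtain ⟨W, hW, hWU⟩ := exists_nhds_zero_quarter hU
  have hW0 : (0 : X) ∈ W := mem_of_mem_nhds hW
  have hnear : ∀ᶠ x' in 𝓝 x, x' - x ∈ W ∧ T x - T x' ∈ W :=
    ((tendsto_sub_nhds_zero_iff.mpr tendsto_id).eventually_mem hW).and
      ((tendsto_const_nhds.sub (hT.tendsto x)).eventually_mem (by rwa [sub_self]))
  obtain ⟨x', hx', hx'x, hTx⟩ :=
    ((mem_closure_iff_frequently.mp hx).and_eventually hnear).exists
  obtain ⟨k, hk, hcycle⟩ : ∃ k, 1 ≤ k ∧ HasChain T W k x' x' := hx' W hW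
  refine ⟨k, hk, ((hcycle.replace_start (by omega) hW0 hTx).replace_end (by omega) hW0
    hx'x).mono ?_⟩
  rintro _ ⟨_, ⟨u, hu, v, hv, rfl⟩, w, hw, rfl⟩
  simpa using hWU hu hv hw hW0

end Shadowing

section Linear

variable {𝕂 X F : Type*} [AddCommGroup X] [FunLike F X X] {T : F} {U : Set X} {n : ℕ} {x y : X}

theorem mapsTo_crSet [TopologicalSpace X] [AddMonoidHomClass F X X] (hT : Continuous T) :
    MapsTo T (CRSet T) (CRSet T) := by
  intro x hx U hU
  obtain ⟨k, hk, c, hc0, hck, hc⟩ := hx _ (hT.tendsto' 0 0 (map_zero T) hU)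
  exact ⟨k, hk, T ∘ c, by simp [hc0], by simp [hck], fun j hj => by simpa using hc j hj⟩

section Normed

variable [SeminormedRing 𝕂] [Module 𝕂 X] [LinearMapClass F 𝕂 X X]

theorem HasChain.smul (h : HasChain T U n x y) (hU : Balanced 𝕂 U) {r : 𝕂}
    (hr : ‖r‖ ≤ 1) :
    HasChain T U n (r • x) (r • y) := by
  obtain ⟨c, hc0, hcn, hc⟩ := h
  exact ⟨r • c, by simp [hc0], by simp [hcn], fun j hj => by
    simpa only [Pi.smul_apply, map_smul, smul_sub] using hU.smul_mem hr (hc j hj)⟩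

theorem HasChain.smul_of_cycle (hcycle : HasChain T U n x x) (hn : n ≠ 0) (hU : Balanced 𝕂 U)
    {r s : 𝕂} (hr : ‖r‖ ≤ 1) (hrs : (r - s) • x ∈ U) :
    HasChain T (U + U) n (r • x) (s • x) :=
  (hcycle.smul hU hr).replace_end hn (hU.zero_mem ⟨_, hrs⟩) (by rwa [← sub_smul])

end Normed

variable [RCLike 𝕂] [Module 𝕂 X] [TopologicalSpace X] [IsTopologicalAddGroup X]
  [ContinuousSMul 𝕂 X] [LinearMapClass F 𝕂 X X]

include 𝕂

theorem exists_hasChain_zero_of_mem_crSet (hx : x ∈ CRSet T) (hU : U ∈ 𝓝 (0 : X)) :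
    ∃ n, HasChain T U n x 0 ∧ HasChain T U n 0 x := by
  obtain ⟨W, hW, hWU⟩ := exists_nhds_zero_half hU
  obtain ⟨U', ⟨hU', hbal⟩, hU'W⟩ := (nhds_basis_balanced 𝕂 X).mem_iff.mp hW
  have hU'U : U' + U' ⊆ U := by
    rintro _ ⟨u, hu, v, hv, rfl⟩
    exact hWU u (hU'W hu) v (hU'W hv)
  obtain ⟨N, hN, hcycle⟩ : ∃ N, 1 ≤ N ∧ HasChain T U' N x x := hx U' hU'
  have hsmall : Tendsto (fun M : ℕ => (M : 𝕂)⁻¹ • x) atTop (𝓝 0) := by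
    simpa using (tendsto_inv_atTop_nhds_zero_nat (𝕜 := 𝕂)).smul_const x
  obtain ⟨M, hMx, hM⟩ := ((hsmall.eventually_mem hU').and (eventually_ne_atTop 0)).exists
  have hM' : (M : 𝕂) ≠ 0 := Nat.cast_ne_zero.mpr hM
  have step : ∀ i j : ℕ, i ≤ M → (i = j + 1 ∨ j = i + 1) →
      HasChain T U N (((i : 𝕂) / M) • x) (((j : 𝕂) / M) • x) := by
    intro i j hi hij
    refine (hcycle.smul_of_cycle (by omega) hbal ?_ ?_).mono hU'U
    · rw [norm_div, RCLike.norm_natCast, RCLike.norm_natCast]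
      exact div_le_one_of_le₀ (by exact_mod_cast hi) M.cast_nonneg
    · rcases hij with rfl | rfl
      · convert hMx using 2
        push_cast
        ring
      · rw [← hbal.neg_mem_iff, ← neg_smul]
        convert hMx using 2
        push_cast
        ring
  refine ⟨M * N, ?_, ?_⟩
  · simpa [hM'] using hasChain_mul_of_forall_succ (T := T)
      (p := fun i => (((M - i : ℕ) : 𝕂) / M) • x) M
      fun i hi => step _ _ (by omega) (Or.inl (by omega))
  · simpa [hM'] using hasChain_mul_of_forall_succ (T := T) (p := fun i => ((i : 𝕂) / M) • x) M
      fun i _ => step _ _ (by omega) (Or.inr rfl)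

theorem exists_hasChain_of_mem_crSet (hx : x ∈ CRSet T) (hy : y ∈ CRSet T)
    (hU : U ∈ 𝓝 (0 : X)) : ∃ n₀, ∀ n ≥ n₀, HasChain T U n x y := by
  obtain ⟨n₁, hx0, -⟩ := exists_hasChain_zero_of_mem_crSet hx hU
  obtain ⟨n₂, -, h0y⟩ := exists_hasChain_zero_of_mem_crSet hy hU
  refine ⟨n₁ + n₂, fun n hn => ?_⟩
  obtain ⟨p, rfl⟩ := Nat.exists_eq_add_of_le hn
  have h00 : HasChain T U p 0 0 := by
    simpa only [iterate_map_zero] using hasChain_iterate (T := T) (mem_of_mem_nhds hU) 0 p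
  rw [show n₁ + n₂ + p = n₁ + p + n₂ by omega]
  exact (hx0.trans h00).trans h0y

theorem finiteShadowingPropertyOn_crSet (hT : PeriodicShadowingProperty T) :
    FiniteShadowingPropertyOn T (CRSet T) := by
  intro V hV
  obtain ⟨U, hU, hshadow⟩ := hT.exists_shadow hV
  refine ⟨U, hU, fun k _ x hx hxU => ?_⟩
  obtain ⟨n₀, hclose⟩ := exists_hasChain_of_mem_crSet (hx k le_rfl) (hx 0 k.zero_le) hU
  obtain ⟨y, hy, hxy⟩ := hshadow k (n₀ + 1) x n₀.succ_ne_zero hxU (hclose _ n₀.le_succ)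
  exact ⟨y, perSet_subset_crSet T hy, hxy⟩

theorem topologicallyMixingOn_crSet (hT : PeriodicShadowingProperty T) :
    TopologicallyMixingOn T (CRSet T) := by
  rintro A B hA hB ⟨a, haA, ha⟩ ⟨b, hbB, hb⟩
  obtain ⟨U, hU, hshadow⟩ := hT.exists_shadow (inter_mem
    ((continuous_sub_left a).tendsto' 0 a (sub_zero a) (hA.mem_nhds haA))
    ((continuous_sub_left b).tendsto' 0 b (sub_zero b) (hB.mem_nhds hbB)))
  obtain ⟨n₀, hab⟩ := exists_hasChain_of_mem_crSet ha hb hU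
  obtain ⟨m₀, hba⟩ := exists_hasChain_of_mem_crSet hb ha hU
  refine ⟨n₀, fun n hn => ?_⟩
  obtain ⟨c, hc0, hcn, hc⟩ := hab n hn
  obtain ⟨y, hy, hcy⟩ := hshadow n (m₀ + 1) c m₀.succ_ne_zero hc
    (by rw [hc0, hcn]; exact hba _ m₀.le_succ)
  refine ⟨y, ⟨?_, perSet_subset_crSet T hy⟩, ?_⟩
  · simpa [hc0] using (hcy 0 n.zero_le).1
  · simpa [hcn] using (hcy n le_rfl).2

end Linear

/-- Let `X` be a topological vector space over `ℝ` or `ℂ` and let `T` be a continuous linear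
operator on `X` with the periodic shadowing property. Then: (a) `Per(T)` is dense in `CR(T)`;
(b) `CR(T)` is a closed `T`-invariant subspace and the restriction `T|_{CR(T)}` has the finite
shadowing property and the periodic shadowing property; (c) `T|_{CR(T)}` is topologically mixing
and Devaney chaotic. Moreover, if `T` has the strict periodic shadowing property, then
`T|_{CR(T)}` has the strict periodic shadowing property. -/
theorem periodicShadowing_chainRecurrent
    {𝕂 : Type*} [RCLike 𝕂] {X : Type*} [AddCommGroup X] [Module 𝕂 X]
    [TopologicalSpace X] [IsTopologicalAddGroup X] [ContinuousSMul 𝕂 X]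
    (T : X →L[𝕂] X) (hT : PeriodicShadowingProperty (⇑T)) :
    CRSet (⇑T) ⊆ closure (PerSet (⇑T)) ∧
    (IsClosed (CRSet (⇑T)) ∧ (∀ x ∈ CRSet (⇑T), T x ∈ CRSet (⇑T))) ∧
    FiniteShadowingPropertyOn (⇑T) (CRSet (⇑T)) ∧
    PeriodicShadowingPropertyOn (⇑T) (CRSet (⇑T)) ∧
    TopologicallyMixingOn (⇑T) (CRSet (⇑T)) ∧
    DevaneyChaoticOn (⇑T) (CRSet (⇑T)) ∧
    (StrictPeriodicShadowingProperty (⇑T) →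
      StrictPeriodicShadowingPropertyOn (⇑T) (CRSet (⇑T))) := by
  have hdense := crSet_subset_closure_perSet hT
  have hmixing := topologicallyMixingOn_crSet hT
  refine ⟨hdense, ⟨isClosed_crSet T.continuous, mapsTo_crSet T.continuous⟩,
    finiteShadowingPropertyOn_crSet hT, hT.periodicShadowingPropertyOn_crSet, hmixing,
    ⟨hmixing.topologicallyTransitiveOn, ?_⟩,
    StrictPeriodicShadowingProperty.strictPeriodicShadowingPropertyOn_crSet⟩
  rwa [inter_eq_left.mpr (perSet_subset_crSet _)]
end

section
/- Suppose that the topology of a locally convex space X is induced by a directed family (‖·‖_α)_{α∈I} of complete seminorms. If T ∈ GL(X) is generalized hyperbolic and T(Ker(‖·‖_α)) = Ker(‖·‖_α) for all α ∈ I, then T has the shadowing property. -/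
open Filter Topology Set

/-- The seminorm `q` is complete: every Cauchy sequence with respect to `q` has a limit with
respect to `q`. -/
def CompleteSeminorm {𝕂 : Type*} [RCLike 𝕂] {X : Type*} [AddCommGroup X] [Module 𝕂 X]
    (q : Seminorm 𝕂 X) : Prop :=
  ∀ u : ℕ → X, (∀ ε > (0 : ℝ), ∃ n₀ : ℕ, ∀ m ≥ n₀, ∀ n ≥ n₀, q (u n - u m) < ε) →
    ∃ x : X, ∀ ε > (0 : ℝ), ∃ n₀ : ℕ, ∀ n ≥ n₀, q (u n - x) < ε

/-- An invertible operator `T ∈ GL(X)` is generalized hyperbolic: there is a topological direct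
sum decomposition `X = M ⊕ N` with `T(M) ⊆ M`, `T⁻¹(N) ⊆ N` and the exponential estimates (GH3),
where the seminorm family `p` induces the topology of `X`. -/
def IsGeneralizedHyperbolicInv {𝕂 : Type*} [RCLike 𝕂] {X : Type*} [AddCommGroup X] [Module 𝕂 X]
    [TopologicalSpace X] {I : Type*} (p : I → Seminorm 𝕂 X) (T : X ≃L[𝕂] X) : Prop :=
  ∃ (M N : Submodule 𝕂 X) (hMN : IsCompl M N),
    Continuous (fun x : X => (M.linearProjOfIsCompl N hMN x : X)) ∧
    (∀ y ∈ M, T y ∈ M) ∧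
    (∀ z ∈ N, T.symm z ∈ N) ∧
    ∀ α : I, ∃ β : I, ∃ c > (0 : ℝ), ∃ t ∈ Set.Ioo (0 : ℝ) 1,
      (∀ y ∈ M, ∀ n : ℕ, p α ((⇑T)^[n] y) ≤ c * t ^ n * p β y) ∧
      (∀ z ∈ N, ∀ n : ℕ, p α ((⇑T.symm)^[n] z) ≤ c * t ^ n * p β z)

/-- An invertible operator `T` has the (two-sided) shadowing property: for every neighborhood
`V` of `0` there is a neighborhood `U` of `0` such that every `U`-pseudotrajectory
`(x_j)_{j∈ℤ}` of `T` is `V`-shadowed by the full trajectory of some point `y`. -/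
def ShadowingProperty {𝕂 : Type*} [RCLike 𝕂] {X : Type*} [AddCommGroup X] [Module 𝕂 X]
    [TopologicalSpace X] (T : X ≃L[𝕂] X) : Prop :=
  ∀ V ∈ 𝓝 (0 : X), ∃ U ∈ 𝓝 (0 : X), ∀ x : ℤ → X,
    (∀ j : ℤ, T (x j) - x (j + 1) ∈ U) →
    ∃ y : X, ∀ j : ℤ, x j - (T ^ j) y ∈ V


/-!
Write the defect of a pseudotrajectory as `d j = x (j + 1) - T (x j) = m j + n j` along
`X = M ⊕ N`. The recurrence `z (j + 1) = T (z j) + d j` is solved by the forward series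
`∑ i, T^i (m (j - 1 - i))` on `M` plus the backward series `-∑ i, T^{-(i + 1)} (n (j + i))` on `N`.
Both converge geometrically for one seminorm `p γ`, but its completeness only produces limits up
to `Ker (p γ)`, so `z` solves the recurrence only modulo `Ker (p α)`. Since `T` preserves that
kernel, the congruence `x j - T^j (x 0 - z 0) ≡ z j` propagates along `ℤ`, and `z` is `p α`-small.
-/

namespace Seminorm

variable {𝕂 : Type*} [RCLike 𝕂] {X : Type*} [AddCommGroup X] [Module 𝕂 X]

theorem apply_sum_Ico_le_geometric (q : Seminorm 𝕂 X) {b : ℕ → X} {C t : ℝ} (ht0 : 0 ≤ t)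
    (ht1 : t < 1) (hb : ∀ i, q (b i) ≤ C * t ^ i) (m n : ℕ) :
    q (∑ i ∈ Finset.Ico m n, b i) ≤ C * t ^ m / (1 - t) := by
  have hC : 0 ≤ C := by simpa using (apply_nonneg q (b 0)).trans (hb 0)
  calc q (∑ i ∈ Finset.Ico m n, b i) ≤ ∑ i ∈ Finset.Ico m n, q (b i) :=
        Finset.le_sum_of_subadditive q (map_zero q).le (map_add_le_add q) _ _
    _ ≤ ∑ i ∈ Finset.Ico m n, C * t ^ i := Finset.sum_le_sum fun i _ => hb i
    _ = C * ∑ i ∈ Finset.Ico m n, t ^ i := (Finset.mul_sum ..).symm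
    _ ≤ C * (t ^ m / (1 - t)) := by gcongr; exact geom_sum_Ico_le_of_lt_one ht0 ht1
    _ = C * t ^ m / (1 - t) := mul_div_assoc' ..

theorem eq_zero_of_tendsto_of_eq_add {r q : Seminorm 𝕂 X} {F : Type*} [FunLike F X X]
    [AddMonoidHomClass F X X] {f : F} {C : ℝ} (hr : ∀ x, r x ≤ C * q x)
    (hf : ∀ x, r (f x) ≤ C * q x) {u v : ℕ → X} {a b c : X}
    (hu : Tendsto (fun n => q (u n - a)) atTop (𝓝 0))
    (hv : Tendsto (fun n => q (v n - b)) atTop (𝓝 0)) (huv : ∀ n, u n = f (v n) + c) :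
    r (a - f b - c) = 0 := by
  have hlim : Tendsto (fun n => C * q (u n - a) + C * q (v n - b)) atTop (𝓝 0) := by
    simpa using (hu.const_mul C).add (hv.const_mul C)
  refine le_antisymm (ge_of_tendsto' hlim fun n => ?_) (apply_nonneg r _)
  calc r (a - f b - c) = r (-(u n - a) + f (v n - b)) := by
        rw [map_sub f, huv n]; congr 1; abel
    _ ≤ r (-(u n - a)) + r (f (v n - b)) := map_add_le_add ..
    _ ≤ C * q (u n - a) + C * q (v n - b) := by
        rw [map_neg_eq_map]; exact add_le_add (hr _) (hf _)

theorem eq_zero_of_apply_succ_sub_eq_zero (r : Seminorm 𝕂 X) {T : X ≃+ X}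
    (hker : ⇑T '' {x | r x = 0} = {x | r x = 0}) {v : ℤ → X}
    (hv : ∀ j, r (v (j + 1) - T (v j)) = 0) (h0 : r (v 0) = 0) (j : ℤ) : r (v j) = 0 := by
  have hT : ∀ x, r (T x) = 0 ↔ r x = 0 := fun x => by
    rw [← mem_ofPred (p := fun x => r x = 0), ← hker, T.injective.mem_set_image]; rfl
  have hstep : ∀ j, r (v (j + 1)) = 0 ↔ r (v j) = 0 := fun j => by
    rw [← hT (v j)]
    have := abs_sub_map_le_sub r (v (j + 1)) (T (v j))
    rw [hv j, abs_nonpos_iff, sub_eq_zero] at this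
    rw [this]
  induction j using Int.induction_on with
  | zero => exact h0
  | succ i ih => exact (hstep i).2 ih
  | pred i ih => exact (hstep (-i - 1)).1 (by rwa [sub_add_cancel])

end Seminorm

namespace CompleteSeminorm

variable {𝕂 : Type*} [RCLike 𝕂] {X : Type*} [AddCommGroup X] [Module 𝕂 X] {q : Seminorm 𝕂 X}

theorem exists_tendsto_of_le (hq : CompleteSeminorm q) {u : ℕ → X} {B : ℕ → ℝ}
    (hB : Tendsto B atTop (𝓝 0)) (hu : ∀ m n, m ≤ n → q (u n - u m) ≤ B m) :
    ∃ z, Tendsto (fun n => q (u n - z)) atTop (𝓝 0) := by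
  obtain ⟨z, hz⟩ := hq u fun ε hε => by
    obtain ⟨n₀, hn₀⟩ := eventually_atTop.1 (hB.eventually (gt_mem_nhds hε))
    refine ⟨n₀, fun m hm n hn => ?_⟩
    rcases le_total m n with hmn | hnm
    · exact (hu m n hmn).trans_lt (hn₀ m hm)
    · rw [map_sub_rev]; exact (hu n m hnm).trans_lt (hn₀ n hn)
  exact ⟨z, tendsto_order.2 ⟨fun a ha => .of_forall fun n => ha.trans_le (apply_nonneg _ _),
    fun a ha => eventually_atTop.2 (hz a ha)⟩⟩

theorem exists_tendsto_sum_of_le_geometric (hq : CompleteSeminorm q) {b : ℕ → X} {C t : ℝ}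
    (ht0 : 0 ≤ t) (ht1 : t < 1) (hb : ∀ i, q (b i) ≤ C * t ^ i) :
    ∃ z, Tendsto (fun n => q (∑ i ∈ Finset.range n, b i - z)) atTop (𝓝 0) ∧
      q z ≤ C / (1 - t) := by
  have hpartial : ∀ m n, m ≤ n →
      q (∑ i ∈ Finset.range n, b i - ∑ i ∈ Finset.range m, b i) ≤ C * t ^ m / (1 - t) :=
    fun m n hmn => by
      rw [← Finset.sum_Ico_eq_sub _ hmn]; exact q.apply_sum_Ico_le_geometric ht0 ht1 hb m n
  have hB : Tendsto (fun m => C * t ^ m / (1 - t)) atTop (𝓝 0) := by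
    simpa using ((tendsto_pow_atTop_nhds_zero_of_lt_one ht0 ht1).const_mul C).div_const (1 - t)
  obtain ⟨z, hz⟩ := hq.exists_tendsto_of_le hB hpartial
  refine ⟨z, hz, ge_of_tendsto' (by simpa using hz.const_add (C / (1 - t))) fun n => ?_⟩
  calc q z ≤ q (∑ i ∈ Finset.range n, b i) + q (∑ i ∈ Finset.range n, b i - z) := by
        simpa using map_sub_le_add q (∑ i ∈ Finset.range n, b i) (∑ i ∈ Finset.range n, b i - z)
    _ ≤ C / (1 - t) + q (∑ i ∈ Finset.range n, b i - z) := by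
        gcongr; simpa using hpartial 0 n n.zero_le

variable {r : Seminorm 𝕂 X} {F : Type*} [FunLike F X X] [AddMonoidHomClass F X X] {f : F}
  {C B t : ℝ}

theorem exists_stable_solution (hq : CompleteSeminorm q) (hr : ∀ x, r x ≤ C * q x)
    (hf : ∀ x, r (f x) ≤ C * q x) (ht0 : 0 ≤ t) (ht1 : t < 1) {a : ℤ → X}
    (ha : ∀ k i, q (f^[i] (a k)) ≤ B * t ^ i) :
    ∃ W : ℤ → X, (∀ k, q (W k) ≤ B / (1 - t)) ∧ ∀ k, r (W (k + 1) - f (W k) - a k) = 0 := by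
  choose W hWlim hWb using fun k : ℤ =>
    hq.exists_tendsto_sum_of_le_geometric (b := fun i => f^[i] (a (k - 1 - i))) ht0 ht1
      fun i => ha _ i
  refine ⟨W, hWb, fun k => Seminorm.eq_zero_of_tendsto_of_eq_add hr hf
    ((hWlim (k + 1)).comp (tendsto_add_atTop_nat 1)) (hWlim k) fun n => ?_⟩
  rw [Finset.sum_range_succ', map_sum]
  congr 1
  · refine Finset.sum_congr rfl fun i _ => ?_
    rw [Function.iterate_succ_apply']
    congr 3
    push_cast
    ring
  · simp

theorem exists_unstable_solution (hq : CompleteSeminorm q) (hr : ∀ x, r x ≤ C * q x)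
    (hf : ∀ x, r (f x) ≤ C * q x) {g : X → X} (hfg : ∀ x, f (g x) = x) (ht0 : 0 ≤ t)
    (ht1 : t < 1) {a : ℤ → X} (ha : ∀ k i, q (g^[i] (a k)) ≤ B * t ^ i) :
    ∃ W : ℤ → X, (∀ k, q (W k) ≤ B / (1 - t)) ∧ ∀ k, r (W (k + 1) - f (W k) - a k) = 0 := by
  have hB : 0 ≤ B := by simpa using (apply_nonneg q (a 0)).trans (ha 0 0)
  choose W hWlim hWb using fun k : ℤ =>
    hq.exists_tendsto_sum_of_le_geometric (b := fun i => -g^[i + 1] (a (k + i))) ht0 ht1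
      fun i => by
        rw [map_neg_eq_map]
        calc q (g^[i + 1] (a (k + i))) ≤ B * t ^ (i + 1) := ha _ _
          _ ≤ B * t ^ i := mul_le_mul_of_nonneg_left (pow_le_pow_of_le_one ht0 ht1.le i.le_succ) hB
  refine ⟨W, hWb, fun k => Seminorm.eq_zero_of_tendsto_of_eq_add hr hf (hWlim (k + 1))
    ((hWlim k).comp (tendsto_add_atTop_nat 1)) fun n => ?_⟩
  have hfg' : ∀ i x, f (g^[i + 1] x) = g^[i] x := fun i x => by
    rw [Function.iterate_succ_apply', hfg]
  simp only [Finset.sum_range_succ' _ n, map_add, map_sum, map_neg, hfg']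
  simp only [Function.iterate_zero, id, Nat.cast_add, Nat.cast_one, Nat.cast_zero, add_zero,
    add_right_comm k, add_assoc k, neg_add_cancel_right]

end CompleteSeminorm

namespace WithSeminorms

variable {𝕂 : Type*} [RCLike 𝕂] {X : Type*} [AddCommGroup X] [Module 𝕂 X] [TopologicalSpace X]
  {I : Type*} [Nonempty I] {p : I → Seminorm 𝕂 X}

theorem exists_ball_subset_of_directed_s3 (hp : WithSeminorms p) (hdir : Directed (· ≤ ·) p)
    {V : Set X} (hV : V ∈ 𝓝 0) : ∃ α, ∃ ε > 0, (p α).ball 0 ε ⊆ V := by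
  obtain ⟨s, ε, hε, hsV⟩ := (hp.mem_nhds_iff 0 V).1 hV
  obtain ⟨α, hα⟩ := hdir.finset_le s
  exact ⟨α, ε, hε, (Seminorm.ball_antitone (Finset.sup_le hα)).trans hsV⟩

theorem exists_le_mul_of_directed (hp : WithSeminorms p) (hdir : Directed (· ≤ ·) p)
    {q : Seminorm 𝕂 X} (hq : Continuous q) : ∃ γ, ∃ C > 0, ∀ x, q x ≤ C * p γ x := by
  obtain ⟨s, C, hC, hqC⟩ := Seminorm.bound_of_continuous hp q hq
  obtain ⟨γ, hγ⟩ := hdir.finset_le s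
  exact ⟨γ, C, NNReal.coe_pos.2 (pos_iff_ne_zero.2 hC), fun x =>
    (hqC x).trans (mul_le_mul_of_nonneg_left (Finset.sup_le hγ x) C.2)⟩

end WithSeminorms

theorem Seminorm.apply_sub_zpow_le {𝕂 : Type*} [RCLike 𝕂] {X : Type*} [AddCommGroup X]
    [Module 𝕂 X] [TopologicalSpace X] (r : Seminorm 𝕂 X) {T : X ≃L[𝕂] X}
    (hker : ⇑T '' {x | r x = 0} = {x | r x = 0}) {x z : ℤ → X}
    (hz : ∀ j, r (z (j + 1) - T (z j) - (x (j + 1) - T (x j))) = 0) (j : ℤ) :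
    r (x j - (T ^ j) (x 0 - z 0)) ≤ r (z j) := by
  set y := x 0 - z 0
  set v : ℤ → X := fun j => x j - (T ^ j) y - z j
  have hv : ∀ j, r (v (j + 1) - T (v j)) = 0 := fun j => by
    have hpow : (T ^ (j + 1)) y = T ((T ^ j) y) := by rw [add_comm, zpow_one_add]; rfl
    rw [← hz j, ← map_neg_eq_map]
    simp only [v, hpow, map_sub]
    congr 1
    abel
  have hv0 : r (v 0) = 0 := by
    have hpow : (T ^ (0 : ℤ)) y = y := by rw [zpow_zero]; rfl
    simp only [v, hpow, y, sub_sub_cancel, sub_self, map_zero]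
  calc r (x j - (T ^ j) y) = r (v j + z j) := by simp [v]
    _ ≤ r (v j) + r (z j) := map_add_le_add ..
    _ = r (z j) := by
        rw [r.eq_zero_of_apply_succ_sub_eq_zero (T := T.toLinearEquiv.toAddEquiv) hker hv hv0,
          zero_add]

theorem IsGeneralizedHyperbolicInv.exists_bounded_solution {𝕂 : Type*} [RCLike 𝕂] {X : Type*}
    [AddCommGroup X] [Module 𝕂 X] [TopologicalSpace X] {I : Type*} [Nonempty I]
    {p : I → Seminorm 𝕂 X} {T : X ≃L[𝕂] X} (hT : IsGeneralizedHyperbolicInv p T)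
    (hp : WithSeminorms p) (hdir : Directed (· ≤ ·) p) (hcomplete : ∀ α, CompleteSeminorm (p α))
    (α : I) {ε : ℝ} (hε : 0 < ε) :
    ∃ μ, ∃ δ > 0, ∀ d : ℤ → X, (∀ j, p μ (d j) < δ) →
      ∃ z : ℤ → X, (∀ j, p α (z j) < ε) ∧ ∀ j, p α (z (j + 1) - T (z j) - d j) = 0 := by
  have := hp.topologicalAddGroup
  obtain ⟨M, N, hMN, hπ, -, -, hGH⟩ := hT
  set π := M.projection N hMN
  -- `p γ` must dominate `p α ∘ T` as well, so that `p γ`-limits commute with `T` modulo `Ker (p α)`.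
  obtain ⟨γ, C₀, hC₀, hγ⟩ := hp.exists_le_mul_of_directed hdir
    (q := p α + (p α).comp (T : X →L[𝕂] X).toLinearMap)
    ((hp.continuous_seminorm α).add ((hp.continuous_seminorm α).comp T.continuous))
  have hr : ∀ x, p α x ≤ C₀ * p γ x := fun x =>
    (le_add_of_nonneg_right (apply_nonneg _ _)).trans (hγ x)
  have hf : ∀ x, p α (T x) ≤ C₀ * p γ x := fun x =>
    (le_add_of_nonneg_left (apply_nonneg _ _)).trans (hγ x)
  obtain ⟨β, c, hc, t, ⟨ht0, ht1⟩, hM, hN⟩ := hGH γ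
  obtain ⟨μ, C₁, hC₁, hμ⟩ := hp.exists_le_mul_of_directed hdir
    (q := (p β).comp π + (p β).comp (LinearMap.id - π))
    (((hp.continuous_seminorm β).comp hπ).add
      ((hp.continuous_seminorm β).comp (continuous_id.sub hπ)))
  have h1t : 0 < 1 - t := sub_pos.2 ht1
  set δ := ε * (1 - t) / (4 * C₀ * c * C₁)
  refine ⟨μ, δ, by positivity, fun d hd => ?_⟩
  have hK : ∀ j, p β (π (d j)) + p β (d j - π (d j)) ≤ C₁ * δ := fun j =>
    (hμ (d j)).trans (mul_le_mul_of_nonneg_left (hd j).le hC₁.le)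
  have hdecay : ∀ {y} i, p β y ≤ C₁ * δ → c * t ^ i * p β y ≤ c * (C₁ * δ) * t ^ i :=
    fun i hy => (mul_le_mul_of_nonneg_left hy (by positivity)).trans_eq (by ring)
  have hmemN : ∀ j, d j - π (d j) ∈ N := fun j => by
    rw [← Submodule.projection_eq_self_sub_projection]; exact Submodule.projection_apply_mem _ _
  obtain ⟨WM, hWMb, hWM⟩ := (hcomplete γ).exists_stable_solution hr hf ht0.le ht1
    (a := fun j => π (d j)) fun k i => (hM _ (Submodule.projection_apply_mem _ _) i).trans
      (hdecay i (le_of_add_le_of_nonneg_left (hK k) (apply_nonneg _ _)))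
  obtain ⟨WN, hWNb, hWN⟩ := (hcomplete γ).exists_unstable_solution hr hf T.apply_symm_apply
    ht0.le ht1 (a := fun j => d j - π (d j)) fun k i => (hN _ (hmemN k) i).trans
      (hdecay i (le_of_add_le_of_nonneg_right (hK k) (apply_nonneg _ _)))
  refine ⟨WM + WN, fun j => ?_, fun j => ?_⟩
  · calc p α ((WM + WN) j) ≤ C₀ * p γ (WM j + WN j) := hr _
      _ ≤ C₀ * (c * (C₁ * δ) / (1 - t) + c * (C₁ * δ) / (1 - t)) := by
          gcongr; exact (map_add_le_add ..).trans (add_le_add (hWMb j) (hWNb j))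
      _ = ε / 2 := by simp only [δ]; field_simp; ring
      _ < ε := half_lt_self hε
  · have := map_add_le_add (p α) (WM (j + 1) - T (WM j) - π (d j))
      (WN (j + 1) - T (WN j) - (d j - π (d j)))
    rw [hWM, hWN, add_zero] at this
    refine le_antisymm (le_of_eq_of_le ?_ this) (apply_nonneg _ _)
    simp only [Pi.add_apply, map_add]
    congr 1
    abel

theorem generalizedHyperbolic_shadowing_of_completeSeminorms_general
    {𝕂 : Type*} [RCLike 𝕂] {X : Type*} [AddCommGroup X] [Module 𝕂 X]
    [TopologicalSpace X]
    {I : Type*} [Nonempty I] (p : I → Seminorm 𝕂 X) (hp : WithSeminorms p)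
    (hdir : ∀ α β : I, ∃ γ : I, p α ≤ p γ ∧ p β ≤ p γ)
    (hcomplete : ∀ α : I, CompleteSeminorm (p α))
    (T : X ≃L[𝕂] X) (hT : IsGeneralizedHyperbolicInv p T)
    (hker : ∀ α : I, ⇑T '' {x : X | p α x = 0} = {x : X | p α x = 0}) :
    ShadowingProperty T := by
  intro V hV
  obtain ⟨α, ε, hε, hεV⟩ := hp.exists_ball_subset_of_directed_s3 hdir hV
  obtain ⟨μ, δ, hδ, hsolve⟩ := hT.exists_bounded_solution hp hdir hcomplete α hε
  refine ⟨(p μ).ball 0 δ, Seminorm.ball_mem_nhds (hp.continuous_seminorm μ) hδ, fun x hx => ?_⟩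
  obtain ⟨z, hzε, hz⟩ := hsolve (fun j => x (j + 1) - T (x j)) fun j => by
    rw [map_sub_rev]; exact (p μ).mem_ball_zero.1 (hx j)
  refine ⟨x 0 - z 0, fun j => hεV ((p α).mem_ball_zero.2 ?_)⟩
  exact ((p α).apply_sub_zpow_le (hker α) hz j).trans_lt (hzε j)

/-- Suppose that the topology of the locally convex space `X` is induced by a directed family
`p` of complete seminorms. If `T ∈ GL(X)` is generalized hyperbolic and
`T(Ker(p α)) = Ker(p α)` for every `α`, then `T` has the shadowing property. -/
theorem generalizedHyperbolic_shadowing_of_completeSeminorms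
    {𝕂 : Type*} [RCLike 𝕂] {X : Type*} [AddCommGroup X] [Module 𝕂 X]
    [TopologicalSpace X] [IsTopologicalAddGroup X] [ContinuousSMul 𝕂 X]
    {I : Type*} [Nonempty I] (p : I → Seminorm 𝕂 X) (hp : WithSeminorms p)
    (hdir : ∀ α β : I, ∃ γ : I, p α ≤ p γ ∧ p β ≤ p γ)
    (hcomplete : ∀ α : I, CompleteSeminorm (p α))
    (T : X ≃L[𝕂] X) (hT : IsGeneralizedHyperbolicInv p T)
    (hker : ∀ α : I, ⇑T '' {x : X | p α x = 0} = {x : X | p α x = 0}) :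
    ShadowingProperty T :=
  generalizedHyperbolic_shadowing_of_completeSeminorms_general p hp hdir hcomplete T hT hker
end

section
/- Suppose that X is the product of a family (X_ℓ)_{ℓ∈L} of locally convex spaces, that T_ℓ ∈ GL(X_ℓ) for each ℓ∈L, and that T ∈ GL(X) is the product operator given by T((x_ℓ)_{ℓ∈L}) := (T_ℓ x_ℓ)_{ℓ∈L}. If each T_ℓ is generalized hyperbolic, then so is T; if each T_ℓ is hyperbolic, then so is T. -/
open Filter Topology Set

/-- An invertible operator `T ∈ GL(X)` is hyperbolic: generalized hyperbolic with both `M` and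
`N` invariant under `T` (so `T(N) = N`). -/
def IsHyperbolicInv {𝕂 : Type*} [RCLike 𝕂] {X : Type*} [AddCommGroup X] [Module 𝕂 X]
    [TopologicalSpace X] {I : Type*} (p : I → Seminorm 𝕂 X) (T : X ≃L[𝕂] X) : Prop :=
  ∃ (M N : Submodule 𝕂 X) (hMN : IsCompl M N),
    Continuous (fun x : X => (M.linearProjOfIsCompl N hMN x : X)) ∧
    (∀ y ∈ M, T y ∈ M) ∧
    (∀ z ∈ N, T z ∈ N) ∧
    (∀ z ∈ N, T.symm z ∈ N) ∧
    ∀ α : I, ∃ β : I, ∃ c > (0 : ℝ), ∃ t ∈ Set.Ioo (0 : ℝ) 1,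
      (∀ y ∈ M, ∀ n : ℕ, p α ((⇑T)^[n] y) ≤ c * t ^ n * p β y) ∧
      (∀ z ∈ N, ∀ n : ℕ, p α ((⇑T.symm)^[n] z) ≤ c * t ^ n * p β z)

/-- The canonical directed family of seminorms inducing the product topology on `∀ ℓ, X ℓ`:
maxima of finitely many seminorms composed with the coordinate projections. -/
noncomputable def piSeminormFamily {𝕂 : Type*} [RCLike 𝕂] {L : Type*} {X : L → Type*}
    [∀ ℓ, AddCommGroup (X ℓ)] [∀ ℓ, Module 𝕂 (X ℓ)] {I : L → Type*}
    (p : ∀ ℓ, I ℓ → Seminorm 𝕂 (X ℓ)) :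
    (Finset L × ∀ ℓ, I ℓ) → Seminorm 𝕂 (∀ ℓ, X ℓ) :=
  fun si => si.1.sup fun ℓ => (p ℓ (si.2 ℓ)).comp (LinearMap.proj ℓ)

/-!
Take `M := ∏ M_ℓ` and `N := ∏ N_ℓ`: the decomposition and the invariance conditions pass to the
product coordinatewise. The projection onto `M` along `N` is the product of the coordinate projections,
hence continuous. A seminorm of the product family only sees finitely many coordinates, so the
constants `c_ℓ` and rates `t_ℓ < 1` of those coordinates can be replaced by a common `c` and a
common `t < 1`.
-/

theorem Equiv.coe_symm_eq_piMap {ι : Type*} {α β : ι → Type*} {e : (∀ i, α i) ≃ ∀ i, β i}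
    {f : ∀ i, α i ≃ β i} (he : ⇑e = Pi.map fun i => ⇑(f i)) :
    ⇑e.symm = Pi.map fun i => ⇑(f i).symm := by
  funext y
  rw [Equiv.symm_apply_eq, he]
  funext i
  exact ((f i).apply_symm_apply (y i)).symm

theorem Finset.exists_pos_forall_le {ι : Type*} (s : Finset ι) (c : ι → ℝ) :
    ∃ C > (0 : ℝ), ∀ i ∈ s, c i ≤ C := by
  obtain ⟨C, hC⟩ := (s.image c).exists_le
  exact ⟨max C 1, by positivity, fun i hi => (hC _ (mem_image_of_mem c hi)).trans (le_max_left _ _)⟩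

theorem Finset.exists_mem_Ioo_forall_le {ι : Type*} (s : Finset ι) {t : ι → ℝ}
    (ht : ∀ i ∈ s, t i < 1) : ∃ τ ∈ Set.Ioo (0 : ℝ) 1, ∀ i ∈ s, t i ≤ τ := by
  obtain ⟨τ, hτ, hmax⟩ := (insert (1 / 2) (s.image t)).exists_max_image id (insert_nonempty _ _)
  refine ⟨τ, ⟨one_half_pos.trans_le (hmax _ (mem_insert_self _ _)), ?_⟩,
    fun i hi => hmax _ (mem_insert_of_mem (mem_image_of_mem t hi))⟩
  rcases mem_insert.1 hτ with rfl | hτ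
  · norm_num
  · obtain ⟨i, hi, rfl⟩ := mem_image.1 hτ
    exact ht i hi

namespace Submodule

variable {R : Type*} [Ring R] {ι : Type*} {φ : ι → Type*} [∀ i, AddCommGroup (φ i)]
  [∀ i, Module R (φ i)] {M N : ∀ i, Submodule R (φ i)}

theorem isCompl_pi (h : ∀ i, IsCompl (M i) (N i)) : IsCompl (pi univ M) (pi univ N) := by
  constructor
  · rw [disjoint_def]
    intro x hxM hxN
    funext i
    exact disjoint_def.1 (h i).disjoint (x i) (hxM i trivial) (hxN i trivial)
  · rw [codisjoint_iff, eq_top_iff]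
    intro x _
    exact mem_sup.2 ⟨fun i => (M i).projection (N i) (h i) (x i),
      fun i _ => projection_apply_mem _ _, fun i => (N i).projection (M i) (h i).symm (x i),
      fun i _ => projection_apply_mem _ _,
      funext fun i => projection_add_projection_eq_self (h i) (x i)⟩

theorem coe_projection_pi (h : ∀ i, IsCompl (M i) (N i)) :
    ⇑((pi univ M).projection (pi univ N) (isCompl_pi h)) =
      Pi.map fun i => ⇑((M i).projection (N i) (h i)) := by
  funext x
  set y : ∀ i, φ i := Pi.map (fun i => ⇑((M i).projection (N i) (h i))) x
  have hy : y ∈ pi univ M := fun i _ => projection_apply_mem _ _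
  have hxy : x - y ∈ pi univ N := fun i _ => sub_projection_mem (h i) (x i)
  rw [← sub_add_cancel x y, map_add, projection_apply_of_mem_left _ hy,
    (projection_apply_eq_zero_iff _).2 hxy, zero_add]

theorem continuous_projection_pi [∀ i, TopologicalSpace (φ i)] (h : ∀ i, IsCompl (M i) (N i))
    (hcont : ∀ i, Continuous ((M i).projection (N i) (h i))) :
    Continuous ((pi univ M).projection (pi univ N) (isCompl_pi h)) := by
  rw [coe_projection_pi h]
  exact .piMap hcont

end Submodule

/-- Condition (GH3) for `f` on `M` and `g` on `N`, with common constants. -/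
def HasExpDecayOn {𝕂 X I : Type*} [SeminormedRing 𝕂] [AddGroup X] [SMul 𝕂 X]
    (p : I → Seminorm 𝕂 X) (f : X → X) (M : Set X) (g : X → X) (N : Set X) : Prop :=
  ∀ α : I, ∃ β : I, ∃ c > (0 : ℝ), ∃ t ∈ Set.Ioo (0 : ℝ) 1,
    (∀ y ∈ M, ∀ n : ℕ, p α (f^[n] y) ≤ c * t ^ n * p β y) ∧
    (∀ z ∈ N, ∀ n : ℕ, p α (g^[n] z) ≤ c * t ^ n * p β z)

section ProductSeminorms

variable {𝕂 : Type*} [RCLike 𝕂] {L : Type*} {X : L → Type*} [∀ ℓ, AddCommGroup (X ℓ)]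
  [∀ ℓ, Module 𝕂 (X ℓ)] {I : L → Type*} {p : ∀ ℓ, I ℓ → Seminorm 𝕂 (X ℓ)}

theorem piSeminormFamily_le_of_forall_le {x y : ∀ ℓ, X ℓ} {s : Finset L} {α β : ∀ ℓ, I ℓ}
    {K : ℝ} (hK : 0 ≤ K) (h : ∀ ℓ ∈ s, p ℓ (α ℓ) (x ℓ) ≤ K * p ℓ (β ℓ) (y ℓ)) :
    piSeminormFamily p (s, α) x ≤ K * piSeminormFamily p (s, β) y :=
  Seminorm.finset_sup_apply_le (mul_nonneg hK (apply_nonneg _ _)) fun ℓ hℓ =>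
    (h ℓ hℓ).trans <| mul_le_mul_of_nonneg_left
      (Seminorm.le_finset_sup_apply (p := fun ℓ => (p ℓ (β ℓ)).comp (LinearMap.proj ℓ)) hℓ) hK

theorem HasExpDecayOn.pi {f g : ∀ ℓ, X ℓ → X ℓ} {M N : ∀ ℓ, Set (X ℓ)}
    (h : ∀ ℓ, HasExpDecayOn (p ℓ) (f ℓ) (M ℓ) (g ℓ) (N ℓ)) :
    HasExpDecayOn (piSeminormFamily p) (Pi.map f) (univ.pi M) (Pi.map g) (univ.pi N) := by
  choose β c hc t ht hf hg using h
  rintro ⟨s, α⟩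
  obtain ⟨C, hC, hcC⟩ := s.exists_pos_forall_le fun ℓ => c ℓ (α ℓ)
  obtain ⟨τ, hτ, htτ⟩ := s.exists_mem_Ioo_forall_le fun ℓ _ => (ht ℓ (α ℓ)).2
  have weaken : ∀ ℓ ∈ s, ∀ n : ℕ, ∀ r : ℝ, 0 ≤ r →
      c ℓ (α ℓ) * t ℓ (α ℓ) ^ n * r ≤ C * τ ^ n * r := fun ℓ hℓ n r hr =>
    mul_le_mul_of_nonneg_right (mul_le_mul (hcC ℓ hℓ)
      (pow_le_pow_left₀ (ht ℓ (α ℓ)).1.le (htτ ℓ hℓ) n) (pow_nonneg (ht ℓ (α ℓ)).1.le n) hC.le) hr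
  have hCτ : ∀ n : ℕ, 0 ≤ C * τ ^ n := fun n => mul_nonneg hC.le (pow_nonneg hτ.1.le n)
  refine ⟨(s, fun ℓ => β ℓ (α ℓ)), C, hC, τ, hτ, fun y hy n => ?_, fun z hz n => ?_⟩
  · refine piSeminormFamily_le_of_forall_le (hCτ n) fun ℓ hℓ => ?_
    rw [Pi.map_iterate]
    exact (hf ℓ _ _ (hy ℓ trivial) n).trans (weaken ℓ hℓ n _ (apply_nonneg _ _))
  · refine piSeminormFamily_le_of_forall_le (hCτ n) fun ℓ hℓ => ?_
    rw [Pi.map_iterate]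
    exact (hg ℓ _ _ (hz ℓ trivial) n).trans (weaken ℓ hℓ n _ (apply_nonneg _ _))

variable [∀ ℓ, TopologicalSpace (X ℓ)] {T : ∀ ℓ, X ℓ ≃L[𝕂] X ℓ}
  {Tprod : (∀ ℓ, X ℓ) ≃L[𝕂] (∀ ℓ, X ℓ)}

theorem IsGeneralizedHyperbolicInv.pi (hT : ⇑Tprod = Pi.map fun ℓ => ⇑(T ℓ))
    (h : ∀ ℓ, IsGeneralizedHyperbolicInv (p ℓ) (T ℓ)) :
    IsGeneralizedHyperbolicInv (piSeminormFamily p) Tprod := by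
  choose M N hMN hproj hTM hTN hdecay using h
  have hT' : ⇑Tprod.symm = Pi.map fun ℓ => ⇑(T ℓ).symm :=
    Equiv.coe_symm_eq_piMap (e := Tprod.toEquiv) (f := fun ℓ => (T ℓ).toEquiv) hT
  refine ⟨_, _, Submodule.isCompl_pi hMN, ?_, ?_, ?_, ?_⟩
  · exact Submodule.continuous_projection_pi hMN hproj
  · exact hT ▸ piMap_mapsTo_pi fun ℓ _ => hTM ℓ
  · exact hT' ▸ piMap_mapsTo_pi fun ℓ _ => hTN ℓ
  · rw [hT, hT']
    exact HasExpDecayOn.pi hdecay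

theorem IsHyperbolicInv.pi (hT : ⇑Tprod = Pi.map fun ℓ => ⇑(T ℓ))
    (h : ∀ ℓ, IsHyperbolicInv (p ℓ) (T ℓ)) :
    IsHyperbolicInv (piSeminormFamily p) Tprod := by
  choose M N hMN hproj hTM hTN hTN' hdecay using h
  have hT' : ⇑Tprod.symm = Pi.map fun ℓ => ⇑(T ℓ).symm :=
    Equiv.coe_symm_eq_piMap (e := Tprod.toEquiv) (f := fun ℓ => (T ℓ).toEquiv) hT
  refine ⟨_, _, Submodule.isCompl_pi hMN, ?_, ?_, ?_, ?_, ?_⟩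
  · exact Submodule.continuous_projection_pi hMN hproj
  · exact hT ▸ piMap_mapsTo_pi fun ℓ _ => hTM ℓ
  · exact hT ▸ piMap_mapsTo_pi fun ℓ _ => hTN ℓ
  · exact hT' ▸ piMap_mapsTo_pi fun ℓ _ => hTN' ℓ
  · rw [hT, hT']
    exact HasExpDecayOn.pi hdecay

end ProductSeminorms

theorem product_generalizedHyperbolic_general
    {𝕂 : Type*} [RCLike 𝕂] {L : Type*} {X : L → Type*}
    [∀ ℓ, AddCommGroup (X ℓ)] [∀ ℓ, Module 𝕂 (X ℓ)] [∀ ℓ, TopologicalSpace (X ℓ)]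
    {I : L → Type*}
    (p : ∀ ℓ, I ℓ → Seminorm 𝕂 (X ℓ))
    (T : ∀ ℓ, X ℓ ≃L[𝕂] X ℓ)
    (Tprod : (∀ ℓ, X ℓ) ≃L[𝕂] (∀ ℓ, X ℓ))
    (hTprod : ∀ (x : ∀ ℓ, X ℓ) (ℓ : L), Tprod x ℓ = T ℓ (x ℓ)) :
    ((∀ ℓ, IsGeneralizedHyperbolicInv (p ℓ) (T ℓ)) →
      IsGeneralizedHyperbolicInv (piSeminormFamily p) Tprod) ∧
    ((∀ ℓ, IsHyperbolicInv (p ℓ) (T ℓ)) →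
      IsHyperbolicInv (piSeminormFamily p) Tprod) := by
  have hT : ⇑Tprod = Pi.map fun ℓ => ⇑(T ℓ) := funext fun x => funext (hTprod x)
  exact ⟨IsGeneralizedHyperbolicInv.pi hT, IsHyperbolicInv.pi hT⟩

/-- Suppose that `X` is the product of a family `(X ℓ)` of locally convex spaces, that
`T ℓ ∈ GL(X ℓ)` for each `ℓ`, and that `Tprod ∈ GL(X)` is the product operator. If each `T ℓ`
is generalized hyperbolic, then so is `Tprod` (with respect to the canonical product family of
seminorms); if each `T ℓ` is hyperbolic, then so is `Tprod`. -/
theorem product_generalizedHyperbolic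
    {𝕂 : Type*} [RCLike 𝕂] {L : Type*} {X : L → Type*}
    [∀ ℓ, AddCommGroup (X ℓ)] [∀ ℓ, Module 𝕂 (X ℓ)] [∀ ℓ, TopologicalSpace (X ℓ)]
    [∀ ℓ, IsTopologicalAddGroup (X ℓ)] [∀ ℓ, ContinuousSMul 𝕂 (X ℓ)]
    {I : L → Type*} [∀ ℓ, Nonempty (I ℓ)]
    (p : ∀ ℓ, I ℓ → Seminorm 𝕂 (X ℓ)) (hp : ∀ ℓ, WithSeminorms (p ℓ))
    (hdir : ∀ ℓ, ∀ α β : I ℓ, ∃ γ : I ℓ, p ℓ α ≤ p ℓ γ ∧ p ℓ β ≤ p ℓ γ)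
    (T : ∀ ℓ, X ℓ ≃L[𝕂] X ℓ)
    (Tprod : (∀ ℓ, X ℓ) ≃L[𝕂] (∀ ℓ, X ℓ))
    (hTprod : ∀ (x : ∀ ℓ, X ℓ) (ℓ : L), Tprod x ℓ = T ℓ (x ℓ)) :
    ((∀ ℓ, IsGeneralizedHyperbolicInv (p ℓ) (T ℓ)) →
      IsGeneralizedHyperbolicInv (piSeminormFamily p) Tprod) ∧
    ((∀ ℓ, IsHyperbolicInv (p ℓ) (T ℓ)) →
      IsHyperbolicInv (piSeminormFamily p) Tprod) :=
  product_generalizedHyperbolic_general p T Tprod hTprod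
end

section
/- Let C be an open connected set in a locally convex space X over ℝ or ℂ. For any a, b ∈ C, there is a homeomorphism h : X → X such that h(a) = b and h(x) = x for all x ∈ X \ C. -/
open Filter Topology Set

/-!
If `p` is a continuous seminorm and `p v < 1`, then for every `φ : X → ℝ` that is `1`-Lipschitz
for `p` the map `x ↦ x + φ x • v` is a homeomorphism: solving `x + φ x • v = y` amounts to finding
a fixed point of the contraction `s ↦ φ (y - s • v)` of `ℝ`, which depends continuously on `y`.
Taking `φ x = max (1 - p (x - c)) 0` moves `c` to `c + v` and fixes everything outside the unit
`p`-ball around `c`. In a locally convex space such balls inside the open set `C` exist around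
every point, so the points of `C` that can be reached from `a` by homeomorphisms fixing `X \ C`
form an open and closed subset of `C`, which by connectedness is all of `C`.
-/

namespace Seminorm

variable {X : Type*} [AddCommGroup X] [Module ℝ X] (p : Seminorm ℝ X)

theorem continuous_of_dist_le_mul [TopologicalSpace X] [IsTopologicalAddGroup X]
    {M : Type*} [PseudoMetricSpace M] (hp : Continuous p) {f : X → M} {C : ℝ}
    (hf : ∀ x y, dist (f x) (f y) ≤ C * p (x - y)) : Continuous f := by
  refine continuous_iff_continuousAt.2 fun y₀ => tendsto_iff_dist_tendsto_zero.2 ?_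
  have hbound : Tendsto (fun y => C * p (y - y₀)) (𝓝 y₀) (𝓝 0) :=
    ((hp.comp (continuous_id.sub continuous_const)).const_mul C).tendsto' y₀ 0 (by simp)
  exact squeeze_zero (fun _ => dist_nonneg) (fun y => hf y y₀) hbound

variable {p} {φ : X → ℝ} {v : X}

theorem contractingWith_comp_sub_smul (hφ : ∀ x y, |φ x - φ y| ≤ p (x - y)) (hv : p v < 1)
    (y : X) : ContractingWith ⟨p v, apply_nonneg p v⟩ fun s : ℝ => φ (y - s • v) := by
  refine ⟨hv, LipschitzWith.of_dist_le_mul fun s t => ?_⟩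
  calc |φ (y - s • v) - φ (y - t • v)| ≤ p ((y - s • v) - (y - t • v)) := hφ _ _
    _ = p ((t - s) • v) := by rw [sub_sub_sub_cancel_left, sub_smul]
    _ = p v * |s - t| := by rw [map_smul_eq_mul, Real.norm_eq_abs, abs_sub_comm, mul_comm]

noncomputable def addSMulInvCoeff (hφ : ∀ x y, |φ x - φ y| ≤ p (x - y)) (hv : p v < 1)
    (y : X) : ℝ :=
  ContractingWith.fixedPoint _ (contractingWith_comp_sub_smul hφ hv y)

variable (hφ : ∀ x y, |φ x - φ y| ≤ p (x - y)) (hv : p v < 1)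

theorem addSMulInvCoeff_spec (y : X) :
    φ (y - addSMulInvCoeff hφ hv y • v) = addSMulInvCoeff hφ hv y :=
  (contractingWith_comp_sub_smul hφ hv y).fixedPoint_isFixedPt

theorem addSMulInvCoeff_eq_of_eq {y : X} {s : ℝ} (hs : φ (y - s • v) = s) :
    addSMulInvCoeff hφ hv y = s :=
  ((contractingWith_comp_sub_smul hφ hv y).fixedPoint_unique hs).symm

theorem dist_addSMulInvCoeff_le (y y' : X) :
    dist (addSMulInvCoeff hφ hv y) (addSMulInvCoeff hφ hv y') ≤ (1 - p v)⁻¹ * p (y - y') := by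
  rw [← div_eq_inv_mul]
  refine (contractingWith_comp_sub_smul hφ hv y).fixedPoint_lipschitz_in_map
    (contractingWith_comp_sub_smul hφ hv y') fun s => ?_
  calc |φ (y - s • v) - φ (y' - s • v)| ≤ p ((y - s • v) - (y' - s • v)) := hφ _ _
    _ = p (y - y') := by rw [sub_sub_sub_cancel_right]

noncomputable def addSMulHomeomorph [TopologicalSpace X] [IsTopologicalAddGroup X]
    [ContinuousSMul ℝ X] (hp : Continuous p) : X ≃ₜ X where
  toFun x := x + φ x • v
  invFun y := y - addSMulInvCoeff hφ hv y • v
  left_inv x := by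
    simp only [addSMulInvCoeff_eq_of_eq hφ hv (s := φ x) (by rw [add_sub_cancel_right]),
      add_sub_cancel_right]
  right_inv y := by
    simp only [addSMulInvCoeff_spec hφ hv y, sub_add_cancel]
  continuous_toFun := by
    have hφc : Continuous φ := continuous_of_dist_le_mul p hp (C := 1) fun x y => by
      simpa [Real.dist_eq] using hφ x y
    exact continuous_id.add (hφc.smul continuous_const)
  continuous_invFun :=
    continuous_id.sub ((continuous_of_dist_le_mul p hp (dist_addSMulInvCoeff_le hφ hv)).smul
      continuous_const)

@[simp]
theorem addSMulHomeomorph_apply [TopologicalSpace X] [IsTopologicalAddGroup X]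
    [ContinuousSMul ℝ X] (hp : Continuous p) (x : X) :
    addSMulHomeomorph hφ hv hp x = x + φ x • v :=
  rfl

theorem abs_bump_sub_bump_le (c x y : X) :
    |max (1 - p (x - c)) 0 - max (1 - p (y - c)) 0| ≤ p (x - y) :=
  calc |max (1 - p (x - c)) 0 - max (1 - p (y - c)) 0|
      ≤ |(1 - p (x - c)) - (1 - p (y - c))| := abs_max_sub_max_le_abs _ _ _
    _ = |p (y - c) - p (x - c)| := by rw [sub_sub_sub_cancel_left]
    _ ≤ p ((y - c) - (x - c)) := abs_sub_map_le_sub p _ _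
    _ = p (x - y) := by rw [sub_sub_sub_cancel_right, ← map_neg_eq_map, neg_sub]

theorem exists_homeomorph_apply_eq_of_mem_ball [TopologicalSpace X] [IsTopologicalAddGroup X]
    [ContinuousSMul ℝ X] (hp : Continuous p) {c d : X} (hd : d ∈ p.ball c 1) :
    ∃ h : X ≃ₜ X, h c = d ∧ ∀ x ∉ p.ball c 1, h x = x := by
  refine ⟨addSMulHomeomorph (abs_bump_sub_bump_le c) ((mem_ball p).1 hd) hp, ?_, fun x hx => ?_⟩
  · simp
  · have hφx : max (1 - p (x - c)) 0 = 0 := max_eq_right (by simpa [mem_ball] using hx)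
    simp [hφx]

end Seminorm

theorem LocallyConvexSpace.exists_continuous_seminorm_ball_subset {X : Type*} [AddCommGroup X]
    [Module ℝ X] [TopologicalSpace X] [IsTopologicalAddGroup X] [ContinuousSMul ℝ X]
    [LocallyConvexSpace ℝ X] {C : Set X} {c : X} (hC : C ∈ 𝓝 c) :
    ∃ p : Seminorm ℝ X, Continuous p ∧ p.ball c 1 ⊆ C := by
  have hC₀ : (c + ·) ⁻¹' C ∈ 𝓝 (0 : X) :=
    (continuous_const_add c).continuousAt.preimage_mem_nhds (by rwa [add_zero])
  obtain ⟨s, ⟨hs₀, hso, hsb, hsc⟩, hsC⟩ := (nhds_hasBasis_absConvex_open ℝ X).mem_iff.1 hC₀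
  let p := gaugeSeminorm hsb hsc (absorbent_nhds_zero (hso.mem_nhds hs₀))
  have hball : p.ball 0 1 = s := gaugeSeminorm_ball_one hso
  refine ⟨p, Seminorm.continuous (r := 1) (hball ▸ hso.mem_nhds hs₀), fun d hd => ?_⟩
  have hds : d - c ∈ s := by rw [← hball, Seminorm.mem_ball_zero]; exact (p.mem_ball).1 hd
  simpa using hsC hds

theorem exists_homeomorph_of_isOpen_isConnected_general
    {X : Type*} [AddCommGroup X] [Module ℝ X]
    [TopologicalSpace X] [IsTopologicalAddGroup X] [ContinuousSMul ℝ X]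
    [LocallyConvexSpace ℝ X]
    (C : Set X) (hC : IsOpen C) (hconn : IsConnected C)
    (a b : X) (ha : a ∈ C) (hb : b ∈ C) :
    ∃ h : X ≃ₜ X, h a = b ∧ ∀ x ∉ C, h x = x := by
  refine hconn.isPreconnected.induction₂ (fun x y => ∃ h : X ≃ₜ X, h x = y ∧ ∀ z ∉ C, h z = z)
    (fun c hc => ?_) ?_ ?_ ha hb
  · obtain ⟨p, hp, hpC⟩ := LocallyConvexSpace.exists_continuous_seminorm_ball_subset
      (hC.mem_nhds hc)
    have hnear : ∀ᶠ d in 𝓝 c, d ∈ p.ball c 1 :=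
      (hp.comp (continuous_id.sub continuous_const)).continuousAt.eventually_lt
        continuousAt_const (by simp)
    filter_upwards [nhdsWithin_le_nhds hnear] with d hd
    obtain ⟨h, hcd, hfix⟩ := p.exists_homeomorph_apply_eq_of_mem_ball hp hd
    exact ⟨h, hcd, fun z hz => hfix z fun hz' => hz (hpC hz')⟩
  · rintro x y z - - - ⟨h₁, hxy, hfix₁⟩ ⟨h₂, hyz, hfix₂⟩
    exact ⟨h₁.trans h₂, by simp [hxy, hyz], fun w hw => by simp [hfix₁ w hw, hfix₂ w hw]⟩
  · rintro x y - - ⟨h, hxy, hfix⟩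
    exact ⟨h.symm, h.symm_apply_eq.2 hxy.symm, fun w hw => h.symm_apply_eq.2 (hfix w hw).symm⟩

/-- Let `C` be an open connected set in a locally convex space `X` (over `ℝ` or `ℂ`). For any
`a, b ∈ C`, there is a homeomorphism `h : X → X` such that `h a = b` and `h x = x` for all
`x ∈ X \ C`. -/
theorem exists_homeomorph_of_isOpen_isConnected
    {𝕂 : Type*} [RCLike 𝕂] {X : Type*} [AddCommGroup X] [Module 𝕂 X]
    [Module ℝ X] [IsScalarTower ℝ 𝕂 X]
    [TopologicalSpace X] [IsTopologicalAddGroup X] [ContinuousSMul 𝕂 X] [ContinuousSMul ℝ X]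
    [LocallyConvexSpace ℝ X] [T2Space X]
    (C : Set X) (hC : IsOpen C) (hconn : IsConnected C)
    (a b : X) (ha : a ∈ C) (hb : b ∈ C) :
    ∃ h : X ≃ₜ X, h a = b ∧ ∀ x ∉ C, h x = x :=
  exists_homeomorph_of_isOpen_isConnected_general C hC hconn a b ha hb
end

section
/- Every open convex set C in a locally convex space X of real dimension at least three, equipped with the uniformity induced from X, is strongly locally multihomogeneous. -/
/-!
Given an entourage, choose a continuous seminorm `p` whose unit ball controls it, and let `U` be
`p (y - x) < 1/5`. The sets `D j = C ∩ {x | p (x - a j) < 1/5}` are open and convex. Since the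
dimension is at least three, there are `c j ∈ D j`, off finitely many planes, such that the
segments `[a j, c j]` are pairwise disjoint, and so are the segments `[b j, c j]`.
A shear `x ↦ x + max (1 - q (x - z)) 0 • d` with `q d < 1` is a homeomorphism supported in the
unit `q`-ball at `z`; finitely many of them push a point along a segment inside a thin tube.
Working in disjoint tubes inside the `D j` gives `E₁ : a j ↦ c j` and `E₂ : b j ↦ c j`. The map
`E₂⁻¹ ∘ E₁` moves each point at most twice, each time within a single `D i`, which gives all
three required properties.
-/

open Filter Topology Set Uniformity Function

/-- A uniform space `Z` is strongly locally multihomogeneous: for every entourage `V` there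
exists an entourage `U ⊆ V` such that for any `k ≥ 1`, any pairwise distinct points
`a₁, …, a_k` and any pairwise distinct points `b₁, …, b_k` with `(a_j, b_j) ∈ U` for all `j`,
there is a homeomorphism `h : Z → Z` with `h (a_j) = b_j` for all `j`, `h(U(a_j)) ⊆ V(a_j)`
for all `j`, and `h x = x` for every `x` outside `U(a₁) ∪ … ∪ U(a_k)`. -/
def StronglyLocallyMultihomogeneous (Z : Type*) [UniformSpace Z] [TopologicalSpace Z] : Prop :=
  ∀ V ∈ uniformity Z, ∃ U ∈ uniformity Z, U ⊆ V ∧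
    ∀ (k : ℕ), 1 ≤ k → ∀ a b : Fin k → Z, Function.Injective a → Function.Injective b →
      (∀ j : Fin k, (a j, b j) ∈ U) →
      ∃ h : Z ≃ₜ Z,
        (∀ j : Fin k, h (a j) = b j) ∧
        (∀ j : Fin k, ∀ x : Z, (a j, x) ∈ U → (a j, h x) ∈ V) ∧
        (∀ x : Z, (∀ j : Fin k, (a j, x) ∉ U) → h x = x)

theorem Function.Injective.mapsTo_of_eqOn_compl {α : Type*} {f : α → α} (hf : f.Injective)
    {s : Set α} (h : EqOn f id sᶜ) : MapsTo f s s := fun x hx => by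
  by_contra hfx
  rw [hf (h hfx)] at hfx
  exact hfx hx

theorem Homeomorph.exists_eqOn_of_pairwiseDisjoint {X ι : Type*} [TopologicalSpace X]
    (s : Finset ι) (H : ι → X ≃ₜ X) (S : ι → Set X) (hH : ∀ i, EqOn (H i) id (S i)ᶜ)
    (hS : (s : Set ι).PairwiseDisjoint S) :
    ∃ E : X ≃ₜ X, (∀ i ∈ s, EqOn E (H i) (S i)) ∧ EqOn E id (⋃ i ∈ s, S i)ᶜ := by
  classical
  induction s using Finset.induction_on with
  | empty => exact ⟨Homeomorph.refl X, by simp, fun _ _ => rfl⟩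
  | insert j s hj ih =>
    rw [Finset.coe_insert] at hS
    obtain ⟨E, hE, hEid⟩ := ih (hS.subset (subset_insert _ _))
    have hdisj : ∀ i ∈ s, Disjoint (S i) (S j) := fun i hi =>
      hS (mem_insert_of_mem _ hi) (mem_insert _ _) (ne_of_mem_of_not_mem hi hj)
    refine ⟨E.trans (H j), fun i hi x hx => ?_, fun x hx => ?_⟩
    · change H j (E x) = H i x
      rcases Finset.mem_insert.mp hi with rfl | hi
      · have hxs : x ∉ ⋃ l ∈ s, S l := by
          simp only [mem_iUnion, not_exists]
          exact fun l hl hxl => (hdisj l hl).ne_of_mem hxl hx rfl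
        rw [hEid hxs, id]
      · have hHx : H i x ∈ S i := (H i).injective.mapsTo_of_eqOn_compl (hH i) hx
        rw [hE i hi hx]
        exact hH j fun h => (hdisj i hi).ne_of_mem hHx h rfl
    · simp only [Finset.set_biUnion_insert, compl_union, mem_inter_iff] at hx
      simp [hEid hx.2, hH j hx.1]

section MovesWithin

variable {X ι : Type*}

def MovesWithin (f : X → X) (D : ι → Set X) : Prop :=
  ∀ x, f x = x ∨ ∃ i, x ∈ D i ∧ f x ∈ D i

variable {f : X → X} {D : ι → Set X}

theorem MovesWithin.symm [TopologicalSpace X] {e : X ≃ₜ X} (h : MovesWithin e D) :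
    MovesWithin e.symm D := fun y => by
  rcases h (e.symm y) with hy | ⟨i, hi, hi'⟩
  · rw [e.apply_symm_apply] at hy
    exact Or.inl hy.symm
  · exact Or.inr ⟨i, by simpa using hi', hi⟩

theorem MovesWithin.apply_eq (h : MovesWithin f D) {x : X} (hx : ∀ i, x ∉ D i) : f x = x :=
  (h x).resolve_right fun ⟨i, hi, _⟩ => hx i hi

theorem MovesWithin.apply_mem_iff (h : MovesWithin f D) {C : Set X} (hD : ∀ i, D i ⊆ C)
    (x : X) : f x ∈ C ↔ x ∈ C := by
  rcases h x with h' | ⟨i, hi, hi'⟩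
  · rw [h']
  · exact iff_of_true (hD i hi') (hD i hi)

theorem MovesWithin.seminorm_sub_lt [AddCommGroup X] [Module ℝ X] (h : MovesWithin f D)
    {p : Seminorm ℝ X} {A : ι → X} {r : ℝ} (hr : 0 < r) (hD : ∀ i, D i ⊆ p.ball (A i) r)
    (x : X) : p (f x - x) < 2 * r := by
  rcases h x with h' | ⟨i, hi, hi'⟩
  · simp [h', hr]
  · have h₁ := p.mem_ball.mp (hD i hi')
    have h₂ := p.mem_ball.mp (hD i hi)
    calc p (f x - x) = p ((f x - A i) - (x - A i)) := by rw [sub_sub_sub_cancel_right]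
      _ ≤ p (f x - A i) + p (x - A i) := map_sub_le_add p _ _
      _ < 2 * r := by linarith

theorem MovesWithin.seminorm_comp_sub_lt [AddCommGroup X] [Module ℝ X] {g : X → X}
    (hf : MovesWithin f D) (hg : MovesWithin g D) {p : Seminorm ℝ X} {A : ι → X} {r : ℝ}
    (hr : 0 < r) (hD : ∀ i, D i ⊆ p.ball (A i) r) (x : X) : p (g (f x) - x) < 4 * r :=
  calc p (g (f x) - x) = p ((g (f x) - f x) + (f x - x)) := by rw [sub_add_sub_cancel]
    _ ≤ p (g (f x) - f x) + p (f x - x) := map_add_le_add p _ _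
    _ < 2 * r + 2 * r := add_lt_add (hg.seminorm_sub_lt hr hD _) (hf.seminorm_sub_lt hr hD _)
    _ = 4 * r := by ring

end MovesWithin

section Seminorm

variable {X : Type*} [AddCommGroup X] [Module ℝ X] {p : Seminorm ℝ X}

variable (p) in
def Seminorm.tent (a x : X) : ℝ := max (1 - p (x - a)) 0

theorem Seminorm.abs_tent_sub_tent_le (a x y : X) : |p.tent a x - p.tent a y| ≤ p (x - y) :=
  calc |p.tent a x - p.tent a y| ≤ |(1 - p (x - a)) - (1 - p (y - a))| :=
        abs_max_sub_max_le_abs _ _ _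
    _ = |p (y - a) - p (x - a)| := by ring_nf
    _ ≤ p ((y - a) - (x - a)) := abs_sub_map_le_sub p _ _
    _ = p (x - y) := by rw [sub_sub_sub_cancel_right, map_sub_rev]

variable [TopologicalSpace X] [IsTopologicalAddGroup X]

theorem Seminorm.continuous_of_abs_sub_le (hp : Continuous p) {f : X → ℝ} {K : ℝ}
    (hf : ∀ x y, |f x - f y| ≤ K * p (x - y)) : Continuous f := by
  refine continuous_iff_continuousAt.mpr fun x => ?_
  rw [ContinuousAt, tendsto_iff_dist_tendsto_zero]
  refine squeeze_zero (fun _ => dist_nonneg) (fun y => hf y x) ?_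
  have : Tendsto (fun y => p (y - x)) (𝓝 x) (𝓝 0) :=
    (hp.comp (continuous_sub_right x)).tendsto' x 0 (by simp)
  simpa using this.const_mul K

theorem Seminorm.continuous_tent (hp : Continuous p) (a : X) : Continuous (p.tent a) :=
  continuous_of_abs_sub_le hp (K := 1) fun x y => by simpa using abs_tent_sub_tent_le a x y

variable [ContinuousSMul ℝ X]

/-- The homeomorphism is the shear `x ↦ x + tent a x • (b - a)`. Its inverse is
`y ↦ y - c y • (b - a)`, where `c y` is the fixed point of the contraction
`t ↦ tent a (y - t • (b - a))` of `ℝ`, which depends continuously on `y`. -/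
theorem Seminorm.exists_homeomorph_eqOn_compl_ball (hp : Continuous p) {a b : X}
    (hab : p (b - a) < 1) : ∃ H : X ≃ₜ X, H a = b ∧ EqOn H id (p.ball a 1)ᶜ := by
  set d := b - a
  set K : NNReal := ⟨p d, apply_nonneg p d⟩
  have hF : ∀ y, ContractingWith K fun t : ℝ => p.tent a (y - t • d) := fun y => by
    refine ⟨hab, LipschitzWith.of_dist_le_mul fun s t => ?_⟩
    calc |p.tent a (y - s • d) - p.tent a (y - t • d)|
        ≤ p ((y - s • d) - (y - t • d)) := abs_tent_sub_tent_le _ _ _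
      _ = K * |s - t| := by
        rw [show (y - s • d) - (y - t • d) = (t - s) • d by module, map_smul_eq_mul,
          Real.norm_eq_abs, abs_sub_comm, mul_comm]
        rfl
  let c y := (hF y).fixedPoint
  have hc : ∀ y, p.tent a (y - c y • d) = c y := fun y => (hF y).fixedPoint_isFixedPt
  have hc_tent : ∀ x, c (x + p.tent a x • d) = p.tent a x := fun x =>
    ((hF _).fixedPoint_unique (by simp [IsFixedPt])).symm
  have hc_cont : Continuous c := by
    refine continuous_of_abs_sub_le hp (K := (1 - K)⁻¹) fun y y' => ?_
    rw [← div_eq_inv_mul]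
    refine (hF y).dist_fixedPoint_fixedPoint_of_dist_le' _ (hF y).fixedPoint_isFixedPt
      (hF y').fixedPoint_isFixedPt fun t => ?_
    rw [Real.dist_eq]
    simpa using abs_tent_sub_tent_le a (y - t • d) (y' - t • d)
  have := p.continuous_tent hp a
  refine ⟨{ toFun := fun x => x + p.tent a x • d
            invFun := fun y => y - c y • d
            left_inv := fun x => by simp [hc_tent]
            right_inv := fun y => by simp [hc] }, ?_, fun x hx => ?_⟩
  · simp [tent, d]
  · have : p.tent a x = 0 := max_eq_right (by simpa using hx)
    simp [this]

theorem Seminorm.exists_homeomorph_eqOn_compl_of_segment (hp : Continuous p) (u v : X)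
    {T : Set X} (hT : ∀ z ∈ segment ℝ u v, p.ball z 1 ⊆ T) :
    ∃ H : X ≃ₜ X, H u = v ∧ EqOn H id Tᶜ := by
  obtain ⟨n, hn⟩ := exists_nat_gt (p (v - u))
  have hn0 : (0 : ℝ) < n := (apply_nonneg _ _).trans_lt hn
  set w : ℕ → X := fun m => u + ((m : ℝ) / n) • (v - u)
  have step : ∀ m ≤ n, ∃ H : X ≃ₜ X, H u = w m ∧ EqOn H id Tᶜ := by
    intro m
    induction m with
    | zero => exact fun _ => ⟨Homeomorph.refl X, by simp [w], fun _ _ => rfl⟩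
    | succ m ih =>
      intro hm
      obtain ⟨H, hHu, hH⟩ := ih (by omega)
      have hw : w m ∈ segment ℝ u v := by
        rw [segment_eq_image']
        refine ⟨_, ⟨by positivity, div_le_one_of_le₀ ?_ hn0.le⟩, rfl⟩
        exact_mod_cast (Nat.le_succ m).trans hm
      have hlen : p (w (m + 1) - w m) < 1 := by
        rw [show w (m + 1) - w m = (n : ℝ)⁻¹ • (v - u) by simp only [w]; push_cast; module,
          map_smul_eq_mul, Real.norm_eq_abs, abs_of_pos (by positivity), inv_mul_lt_iff₀ hn0,
          mul_one]
        exact hn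
      obtain ⟨M, hM, hMid⟩ := exists_homeomorph_eqOn_compl_ball hp hlen
      refine ⟨H.trans M, by simp [hHu, hM], fun x hx => ?_⟩
      change M (H x) = x
      rw [hH hx]
      exact hMid fun h => hx (hT _ hw h)
  obtain ⟨H, hHu, hH⟩ := step n le_rfl
  exact ⟨H, by simp [hHu, w, hn0.ne'], hH⟩

end Seminorm

section Uniform

variable {X : Type*} [UniformSpace X]

theorem IsCompact.eventually_smallSets_biUnion_ball_subset {K U : Set X} (hK : IsCompact K)
    (hU : IsOpen U) (hKU : K ⊆ U) :
    ∀ᶠ V in (𝓤 X).smallSets, ⋃ x ∈ K, UniformSpace.ball x V ⊆ U := by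
  obtain ⟨V, hV, -, hVU⟩ := lebesgue_number_of_compact_open hK hU hKU
  refine (eventually_smallSets' fun V W hVW hW => ?_).mpr
    ⟨V, hV, iUnion₂_subset fun x hx => hVU x hx⟩
  exact (iUnion₂_mono fun x _ => UniformSpace.ball_mono hVW x).trans hW

theorem Disjoint.eventually_smallSets_disjoint_biUnion_ball {K L : Set X} (hKL : Disjoint K L)
    (hK : IsCompact K) (hL : IsClosed L) :
    ∀ᶠ V in (𝓤 X).smallSets,
      Disjoint (⋃ x ∈ K, UniformSpace.ball x V) (⋃ x ∈ L, UniformSpace.ball x V) := by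
  refine (eventually_smallSets' fun V W hVW hW => ?_).mpr (hKL.exists_uniform_thickening hK hL)
  exact hW.mono (iUnion₂_mono fun x _ => UniformSpace.ball_mono hVW x)
    (iUnion₂_mono fun x _ => UniformSpace.ball_mono hVW x)

theorem exists_mem_uniformity_pairwise_disjoint_biUnion_ball_subset [T2Space X] {ι : Type*}
    [Finite ι] {S D : ι → Set X} (hS : ∀ i, IsCompact (S i)) (hD : ∀ i, IsOpen (D i))
    (hSD : ∀ i, S i ⊆ D i) (hSS : Pairwise (Disjoint on S)) :
    ∃ V ∈ 𝓤 X, (∀ i, ⋃ z ∈ S i, UniformSpace.ball z V ⊆ D i) ∧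
      Pairwise (Disjoint on fun i => ⋃ z ∈ S i, UniformSpace.ball z V) := by
  have hsub := eventually_all.2 fun i =>
    (hS i).eventually_smallSets_biUnion_ball_subset (hD i) (hSD i)
  have hdisj : ∀ᶠ V in (𝓤 X).smallSets,
      Pairwise (Disjoint on fun i => ⋃ z ∈ S i, UniformSpace.ball z V) :=
    eventually_all.2 fun i => eventually_all.2 fun l => by
      by_cases hil : i = l
      · exact .of_forall fun _ h => absurd hil h
      · exact ((hSS hil).eventually_smallSets_disjoint_biUnion_ball (hS i)
          (hS l).isClosed).mono fun _ h _ => h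
  obtain ⟨V, hV, hVP⟩ := eventually_smallSets.1 (hsub.and hdisj)
  exact ⟨V, hV, hVP V subset_rfl⟩

end Uniform

section LocallyConvex

variable {X : Type*} [AddCommGroup X] [Module ℝ X] [UniformSpace X] [IsUniformAddGroup X]
  [ContinuousSMul ℝ X] [LocallyConvexSpace ℝ X]

theorem exists_continuous_seminorm_subset_of_mem_uniformity {V : Set (X × X)} (hV : V ∈ 𝓤 X) :
    ∃ p : Seminorm ℝ X, Continuous p ∧ ∀ x y, p (y - x) < 1 → (x, y) ∈ V := by
  rw [uniformity_eq_comap_nhds_zero X] at hV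
  obtain ⟨N, hN, hNV⟩ := hV
  obtain ⟨W, ⟨hW0, hWo, hWbal, hWconv⟩, hWN⟩ :=
    (nhds_hasBasis_absConvex_open ℝ X).mem_iff.mp hN
  have hWnhds : W ∈ 𝓝 0 := hWo.mem_nhds hW0
  have hWabs := absorbent_nhds_zero (𝕜 := ℝ) hWnhds
  refine ⟨gaugeSeminorm hWbal hWconv hWabs, continuous_gauge hWconv hWnhds,
    fun x y h => hNV (hWN ?_)⟩
  rw [← gaugeSeminorm_ball_one hWo (hs₀ := hWbal) (hs₁ := hWconv) (hs₂ := hWabs)]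
  simpa using h

theorem exists_continuous_seminorm_subset_of_mem_uniformity_subtype {C : Set X}
    {V : Set (C × C)} (hV : V ∈ 𝓤 C) :
    ∃ p : Seminorm ℝ X, Continuous p ∧ (∀ x y : C, p ((y : X) - x) < 1 → (x, y) ∈ V) ∧
      ∀ r > 0, {z : C × C | p ((z.2 : X) - z.1) < r} ∈ 𝓤 C := by
  rw [uniformity_subtype] at hV ⊢
  obtain ⟨V', hV', hV'V⟩ := mem_comap.1 hV
  obtain ⟨p, hp, hpV'⟩ := exists_continuous_seminorm_subset_of_mem_uniformity hV'
  refine ⟨p, hp, fun x y h => hV'V (hpV' x y h), fun r hr =>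
    mem_comap.2 ⟨{z : X × X | p (z.2 - z.1) < r}, ?_, fun z hz => hz⟩⟩
  rw [uniformity_eq_comap_nhds_zero X]
  exact mem_of_superset (preimage_mem_comap (p.ball_mem_nhds hp hr)) fun z hz => by
    simpa using hz

theorem exists_homeomorph_movesWithin_of_pairwise_disjoint_segment [T2Space X] {ι : Type*}
    [Finite ι] {A c : ι → X} {D : ι → Set X} (hD : ∀ i, IsOpen (D i))
    (hAcD : ∀ i, segment ℝ (A i) (c i) ⊆ D i)
    (hAc : Pairwise (Disjoint on fun i => segment ℝ (A i) (c i))) :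
    ∃ E : X ≃ₜ X, (∀ i, E (A i) = c i) ∧ MovesWithin E D := by
  have hS : ∀ i, IsCompact (segment ℝ (A i) (c i)) := fun i => by
    simpa only [segment_eq_image'] using isCompact_Icc.image (by fun_prop)
  obtain ⟨V, hV, hVD, hVdisj⟩ :=
    exists_mem_uniformity_pairwise_disjoint_biUnion_ball_subset hS hD hAcD hAc
  set T := fun i => ⋃ z ∈ segment ℝ (A i) (c i), UniformSpace.ball z V
  obtain ⟨p, hp, hpV⟩ := exists_continuous_seminorm_subset_of_mem_uniformity hV
  have hST : ∀ i, ∀ z ∈ segment ℝ (A i) (c i), p.ball z 1 ⊆ T i := fun i z hz y hy =>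
    mem_biUnion hz (hpV z y (p.mem_ball.1 hy))
  choose H hHA hH using fun i => p.exists_homeomorph_eqOn_compl_of_segment hp (A i) (c i) (hST i)
  cases nonempty_fintype ι
  obtain ⟨E, hEH, hEid⟩ := Homeomorph.exists_eqOn_of_pairwiseDisjoint Finset.univ H T hH
    fun i _ l _ hil => hVdisj hil
  have hAT : ∀ i, A i ∈ T i := fun i =>
    hST i _ (left_mem_segment ℝ _ _) (p.mem_ball_self one_pos)
  refine ⟨E, fun i => (hEH i (Finset.mem_univ i) (hAT i)).trans (hHA i), fun x => ?_⟩
  by_cases hx : ∃ i, x ∈ T i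
  · obtain ⟨i, hx⟩ := hx
    refine Or.inr ⟨i, hVD i hx, hVD i ?_⟩
    rw [hEH i (Finset.mem_univ i) hx]
    exact (H i).injective.mapsTo_of_eqOn_compl (hH i) hx
  · exact Or.inl (hEid (by simpa using hx))

end LocallyConvex

section Segment

variable {X : Type*} [AddCommGroup X] [Module ℝ X] {a b c u v z : X}

theorem mem_affineSpan_pair_of_mem_segment (hz : z ∈ segment ℝ a c) (hza : z ≠ a) :
    c ∈ line[ℝ, a, z] := by
  rw [segment_eq_image_lineMap] at hz
  obtain ⟨t, -, rfl⟩ := hz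
  have ht : t ≠ 0 := by rintro rfl; simp at hza
  convert AffineMap.lineMap_mem_affineSpan_pair t⁻¹ a (AffineMap.lineMap a c t) using 1
  simp only [AffineMap.lineMap_apply_module']
  match_scalars <;> field_simp
  ring

theorem notMem_segment_of_notMem_affineSpan_pair (hba : b ≠ a) (hc : c ∉ line[ℝ, a, b]) :
    b ∉ segment ℝ a c := fun hb => hc (mem_affineSpan_pair_of_mem_segment hb hba)

theorem disjoint_segment_of_notMem_affineSpan (ha : a ∉ segment ℝ u v)
    (hc : c ∉ affineSpan ℝ {a, u, v}) : Disjoint (segment ℝ a c) (segment ℝ u v) := by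
  refine Set.disjoint_left.mpr fun z hzac hzuv => hc ?_
  have hz : z ∈ affineSpan ℝ {a, u, v} :=
    (affineSpan ℝ _).convex.segment_subset (mem_affineSpan ℝ (by simp))
      (mem_affineSpan ℝ (by simp)) hzuv
  exact affineSpan_pair_le_of_mem_of_mem (mem_affineSpan ℝ (by simp)) hz
    (mem_affineSpan_pair_of_mem_segment hzac fun h => ha (h ▸ hzuv))

end Segment

theorem AffineSubspace.direction_eq_top_of_nonempty_interior {X : Type*} [AddCommGroup X]
    [Module ℝ X] [TopologicalSpace X] [IsTopologicalAddGroup X] [ContinuousSMul ℝ X]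
    (s : AffineSubspace ℝ X) (hs : (interior (s : Set X)).Nonempty) : s.direction = ⊤ := by
  obtain ⟨x, hx⟩ := hs
  refine s.direction.eq_top_of_nonempty_interior' ⟨0, ?_⟩
  rw [s.coe_direction_eq_vsub_set_right (interior_subset hx)]
  have := (Homeomorph.subRight x).image_interior (s : Set X)
  simp only [Homeomorph.subRight_apply] at this
  simpa [← this] using ⟨x, hx, sub_self x⟩

section Generic

variable {X : Type*} [AddCommGroup X] [Module ℝ X] [TopologicalSpace X] [IsTopologicalAddGroup X]
  [ContinuousSMul ℝ X]

theorem isClosed_affineSpan_of_finite [T2Space X] {s : Set X} (hs : s.Finite) :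
    IsClosed (affineSpan ℝ s : Set X) := by
  have := finiteDimensional_vectorSpan_of_finite ℝ hs
  rw [← AffineSubspace.isClosed_direction_iff, direction_affineSpan]
  exact Submodule.closed_of_finiteDimensional _

theorem interior_affineSpan_triple_eq_empty (hdim : 3 ≤ Module.rank ℝ X) (x y z : X) :
    interior (affineSpan ℝ {x, y, z} : Set X) = ∅ := by
  by_contra h
  have htop := (affineSpan ℝ _).direction_eq_top_of_nonempty_interior (nonempty_iff_ne_empty.2 h)
  rw [direction_affineSpan] at htop
  have hle : Module.finrank ℝ (vectorSpan ℝ ({x, y, z} : Set X)) ≤ 2 := by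
    have hrange : range ![x, y, z] = {x, y, z} := by
      simp only [Matrix.range_cons, Matrix.range_empty, union_empty, singleton_union]
    rw [← hrange]
    exact finrank_vectorSpan_range_le ℝ ![x, y, z] rfl
  have := finiteDimensional_vectorSpan_of_finite ℝ (toFinite {x, y, z})
  have hX : Module.rank ℝ X ≤ 2 := by
    rw [← rank_top ℝ X, ← htop, ← Module.finrank_eq_rank]
    exact_mod_cast hle
  exact absurd (hdim.trans hX) (by norm_num)

theorem dense_biInter_compl_of_isClosed {Y κ : Type*} [TopologicalSpace Y] (s : Finset κ)
    {F : κ → Set Y} (hc : ∀ j, IsClosed (F j)) (hi : ∀ j, interior (F j) = ∅) :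
    Dense (⋂ j ∈ s, (F j)ᶜ) := by
  classical
  induction s using Finset.induction_on with
  | empty => simp
  | insert j s _ ih =>
    rw [Finset.set_biInter_insert]
    exact (interior_eq_empty_iff_dense_compl.1 (hi j)).inter_of_isOpen_left ih
      (hc j).isOpen_compl

/-- The `c i` are chosen one at a time, each off the finitely many planes through `P m i`, `P m l`
and the current `c l`. Choosing `c i` off the line through `P m i` and `P m l` also for the later
indices `l` keeps `P m l` off `[P m i, c i]`, which the later choices need. -/
theorem exists_pairwise_disjoint_segment [T2Space X] (hdim : 3 ≤ Module.rank ℝ X)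
    {ι κ : Type*} [Finite ι] [Finite κ] (P : κ → ι → X) (hP : ∀ m, Injective (P m))
    {O : ι → Set X} (hO : ∀ i, IsOpen (O i)) (hne : ∀ i, (O i).Nonempty) :
    ∃ c : ι → X, (∀ i, c i ∈ O i) ∧
      ∀ m, Pairwise (Disjoint on fun i => segment ℝ (P m i) (c i)) := by
  classical
  cases nonempty_fintype ι
  cases nonempty_fintype κ
  suffices ∀ s : Finset ι, ∃ c : ι → X, ∀ i ∈ s, c i ∈ O i ∧ ∀ m l, l ≠ i →
      P m l ∉ segment ℝ (P m i) (c i) ∧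
      (l ∈ s → Disjoint (segment ℝ (P m i) (c i)) (segment ℝ (P m l) (c l))) by
    obtain ⟨c, hc⟩ := this Finset.univ
    exact ⟨c, fun i => (hc i (Finset.mem_univ i)).1,
      fun m i l hil => ((hc i (Finset.mem_univ i)).2 m l hil.symm).2 (Finset.mem_univ l)⟩
  intro s
  induction s using Finset.induction_on with
  | empty => exact ⟨fun _ => 0, by simp⟩
  | insert j s hj ih =>
    obtain ⟨c, hc⟩ := ih
    obtain ⟨x, hxO, hx⟩ : ∃ x ∈ O j, ∀ ml : κ × ι,
        x ∉ affineSpan ℝ {P ml.1 j, P ml.1 ml.2, c ml.2} := by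
      obtain ⟨x, hxO, hx⟩ := (dense_biInter_compl_of_isClosed Finset.univ
        (F := fun ml : κ × ι => (affineSpan ℝ {P ml.1 j, P ml.1 ml.2, c ml.2} : Set X))
        (fun _ => isClosed_affineSpan_of_finite (toFinite _))
        (fun _ => interior_affineSpan_triple_eq_empty hdim _ _ _)).inter_open_nonempty _
        (hO j) (hne j)
      exact ⟨x, hxO, by simpa using hx⟩
    have hpt : ∀ m l, l ≠ j → P m l ∉ segment ℝ (P m j) x := fun m l hlj =>
      notMem_segment_of_notMem_affineSpan_pair ((hP m).ne hlj)
        fun h => hx (m, l) (affineSpan_mono ℝ (by intro; simp; tauto) h)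
    have hnew : ∀ m, ∀ l ∈ s, Disjoint (segment ℝ (P m j) x) (segment ℝ (P m l) (c l)) :=
      fun m l hl => disjoint_segment_of_notMem_affineSpan
        ((hc l hl).2 m j (ne_of_mem_of_not_mem hl hj).symm).1 (hx (m, l))
    refine ⟨update c j x, fun i hi => ?_⟩
    rcases Finset.mem_insert.mp hi with rfl | his
    · refine ⟨by simpa using hxO, fun m l hli => ⟨by simpa using hpt m l hli, fun hl => ?_⟩⟩
      simpa [hli] using hnew m l ((Finset.mem_insert.mp hl).resolve_left hli)
    · have hij : i ≠ j := ne_of_mem_of_not_mem his hj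
      refine ⟨by simpa [hij] using (hc i his).1, fun m l hli => ?_⟩
      refine ⟨by simpa [hij] using ((hc i his).2 m l hli).1, fun hl => ?_⟩
      rcases Finset.mem_insert.mp hl with rfl | hls
      · simpa [hij] using (hnew m i his).symm
      · simpa [hij, ne_of_mem_of_not_mem hls hj] using ((hc i his).2 m l hli).2 hls

end Generic

theorem exists_homeomorph_pair_movesWithin {X ι : Type*} [AddCommGroup X] [Module ℝ X]
    [UniformSpace X] [IsUniformAddGroup X] [ContinuousSMul ℝ X] [LocallyConvexSpace ℝ X]
    [T2Space X] (hdim : 3 ≤ Module.rank ℝ X) [Finite ι] {A B : ι → X} (hA : Injective A)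
    (hB : Injective B) {D : ι → Set X} (hD : ∀ i, IsOpen (D i)) (hDconv : ∀ i, Convex ℝ (D i))
    (hAD : ∀ i, A i ∈ D i) (hBD : ∀ i, B i ∈ D i) :
    ∃ E₁ E₂ : X ≃ₜ X, (∀ i, E₂ (E₁ (A i)) = B i) ∧ MovesWithin E₁ D ∧ MovesWithin E₂ D := by
  obtain ⟨c, hcD, hc⟩ := exists_pairwise_disjoint_segment hdim ![A, B]
    (Fin.forall_fin_two.2 ⟨hA, hB⟩) hD fun i => ⟨A i, hAD i⟩
  obtain ⟨E₁, hE₁, hE₁D⟩ := exists_homeomorph_movesWithin_of_pairwise_disjoint_segment hD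
    (fun i => (hDconv i).segment_subset (hAD i) (hcD i)) (hc 0)
  obtain ⟨E₂, hE₂, hE₂D⟩ := exists_homeomorph_movesWithin_of_pairwise_disjoint_segment hD
    (fun i => (hDconv i).segment_subset (hBD i) (hcD i)) (hc 1)
  exact ⟨E₁, E₂.symm, fun i => by rw [hE₁, ← hE₂, E₂.symm_apply_apply], hE₁D, hE₂D.symm⟩

theorem isOpen_convex_stronglyLocallyMultihomogeneous_general
    {X : Type*} [AddCommGroup X]
    [Module ℝ X]
    [UniformSpace X] [IsUniformAddGroup X] [ContinuousSMul ℝ X]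
    [LocallyConvexSpace ℝ X] [T2Space X]
    (hdim : 3 ≤ Module.rank ℝ X)
    (C : Set X) (hC : IsOpen C) (hconv : Convex ℝ C) :
    StronglyLocallyMultihomogeneous C := by
  intro V hV
  obtain ⟨p, hp, hpV, hpU⟩ := exists_continuous_seminorm_subset_of_mem_uniformity_subtype hV
  refine ⟨_, hpU 5⁻¹ (by norm_num), fun z hz => hpV _ _ (hz.trans (by norm_num)), ?_⟩
  intro k _ a b ha hb hab
  set D : Fin k → Set X := fun j => C ∩ p.ball (a j) 5⁻¹
  have hDp : ∀ j, D j ⊆ p.ball (a j) 5⁻¹ := fun j => inter_subset_right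
  obtain ⟨E₁, E₂, hE, hE₁, hE₂⟩ := exists_homeomorph_pair_movesWithin hdim
    (Subtype.val_injective.comp ha) (Subtype.val_injective.comp hb) (D := D)
    (fun j => hC.inter (isOpen_lt (hp.comp (continuous_sub_right _)) continuous_const))
    (fun j => hconv.inter (p.convex_ball _ _))
    (fun j => ⟨(a j).2, p.mem_ball_self (by norm_num)⟩) (fun j => ⟨(b j).2, p.mem_ball.2 (hab j)⟩)
  refine ⟨(E₁.trans E₂).subtype fun x => ?_, fun j => Subtype.ext (hE j),
    fun j x hx => hpV _ _ ?_, fun x hx => Subtype.ext ?_⟩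
  · simp [hE₂.apply_mem_iff fun j => inter_subset_left,
      hE₁.apply_mem_iff fun j => inter_subset_left]
  · calc p (E₂ (E₁ x) - a j) = p ((E₂ (E₁ x) - x) + (x - a j)) := by rw [sub_add_sub_cancel]
      _ ≤ p (E₂ (E₁ x) - x) + p (x - a j) := map_add_le_add p _ _
      _ < 4 * 5⁻¹ + 5⁻¹ := add_lt_add (hE₁.seminorm_comp_sub_lt hE₂ (by norm_num) hDp x) hx
      _ = 1 := by norm_num
  · change E₂ (E₁ x) = x
    have hxD : ∀ j, (x : X) ∉ D j := fun j h => hx j h.2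
    rw [hE₁.apply_eq hxD, hE₂.apply_eq hxD]

/-- Every open convex set in a locally convex space of real dimension at least three, equipped
with the uniformity induced from the space, is strongly locally multihomogeneous. -/
theorem isOpen_convex_stronglyLocallyMultihomogeneous
    {𝕂 : Type*} [RCLike 𝕂] {X : Type*} [AddCommGroup X] [Module 𝕂 X]
    [Module ℝ X] [IsScalarTower ℝ 𝕂 X]
    [UniformSpace X] [IsUniformAddGroup X] [ContinuousSMul 𝕂 X] [ContinuousSMul ℝ X]
    [LocallyConvexSpace ℝ X] [T2Space X]
    (hdim : 3 ≤ Module.rank ℝ X)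
    (C : Set X) (hC : IsOpen C) (hconv : Convex ℝ C) :
    StronglyLocallyMultihomogeneous C :=
  isOpen_convex_stronglyLocallyMultihomogeneous_general hdim C hC hconv
end

section
/- Every open convex set C in a locally convex space X of real dimension at least two, equipped with the uniformity induced from X, has property (P). -/
/-!
Convexity reduces everything to straight segments. After perturbing the targets `bⱼ` to nearby
`b'ⱼ`, chosen so that `b'ᵢ - b'ⱼ ∉ ℝ (aᵢ - aⱼ)` (possible because lines have empty interior once
the dimension is at least two), the points `aⱼ + t (b'ⱼ - aⱼ)` stay pairwise distinct for all
`t ∈ [0, 1]`. By compactness a single continuous seminorm `q` keeps them `q`-apart and keeps their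
unit `q`-balls inside `C`, so the motion can be realised in finitely many small steps, each a
product of disjointly supported bumps `x ↦ x + max (1 - q (x - c)) 0 • w`. A final family of bumps
moves `b'ⱼ` back to `bⱼ`. A bump is the identity off a ball contained in `C`, hence preserves `C`,
and moves every point by a multiple `t • w` with `t ∈ [0, 1]`, which bounds the displacement in
every seminorm.
-/

open Filter Topology Set

/-- A uniform space `Z` has property (P): for each entourage `V` there exists an entourage `U`
such that for any `k ≥ 1`, any pairwise distinct points `a₁, …, a_k` and any pairwise distinct
points `b₁, …, b_k` with `(a_j, b_j) ∈ U` for all `j`, there is a homeomorphism `h : Z → Z`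
with `h (a_j) = b_j` for all `j` and `(x, h x) ∈ V` for all `x`. -/
def PropertyP (Z : Type*) [UniformSpace Z] [TopologicalSpace Z] : Prop :=
  ∀ V ∈ uniformity Z, ∃ U ∈ uniformity Z,
    ∀ (k : ℕ), 1 ≤ k → ∀ a b : Fin k → Z, Function.Injective a → Function.Injective b →
      (∀ j : Fin k, (a j, b j) ∈ U) →
      ∃ h : Z ≃ₜ Z, (∀ j : Fin k, h (a j) = b j) ∧ ∀ x : Z, (x, h x) ∈ V

open Function Uniformity

section Support

variable {α : Type*}

theorem mapsTo_of_forall_notMem_eq {f : α → α} (hf : Injective f) {A : Set α}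
    (hA : ∀ x ∉ A, f x = x) : MapsTo f A A := fun x hx => by
  by_contra h
  rw [hf (hA _ h)] at h
  exact h hx

theorem mem_iff_apply_mem_of_forall_notMem_eq {f : α → α} (hf : Injective f) {A C : Set α}
    (hA : ∀ x ∉ A, f x = x) (hAC : A ⊆ C) (x : α) : x ∈ C ↔ f x ∈ C := by
  by_cases hx : x ∈ A
  · exact iff_of_true (hAC hx) (hAC (mapsTo_of_forall_notMem_eq hf hA hx))
  · rw [hA x hx]

theorem Homeomorph.exists_eq_on_of_pairwise_disjoint {X ι : Type*} [TopologicalSpace X]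
    [Finite ι] (h : ι → X ≃ₜ X) {A : ι → Set X} (hA : Pairwise (Disjoint on A))
    (hh : ∀ i, ∀ x ∉ A i, h i x = x) :
    ∃ e : X ≃ₜ X, (∀ i, ∀ x ∈ A i, e x = h i x) ∧ ∀ x, (∀ i, x ∉ A i) → e x = x := by
  classical
  cases nonempty_fintype ι
  suffices ∀ s : Finset ι, ∃ e : X ≃ₜ X, (∀ i ∈ s, ∀ x ∈ A i, e x = h i x) ∧
      ∀ x, (∀ i ∈ s, x ∉ A i) → e x = x by
    obtain ⟨e, he, he'⟩ := this Finset.univ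
    exact ⟨e, fun i => he i (Finset.mem_univ i), fun x hx => he' x fun i _ => hx i⟩
  intro s
  induction s using Finset.induction_on with
  | empty => exact ⟨Homeomorph.refl X, by simp, fun _ _ => rfl⟩
  | insert i s hi ih =>
    obtain ⟨e, he, he'⟩ := ih
    refine ⟨e.trans (h i), fun j hj x hx => ?_, fun x hx => ?_⟩
    · rw [Homeomorph.trans_apply]
      rcases Finset.mem_insert.1 hj with rfl | hj
      · rw [he' x fun k hk => disjoint_left.1 (hA (ne_of_mem_of_not_mem hk hi).symm) hx]
      · have hji : j ≠ i := ne_of_mem_of_not_mem hj hi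
        rw [he j hj x hx, hh i _ (disjoint_left.1 (hA hji)
          (mapsTo_of_forall_notMem_eq (h j).injective (hh j) hx))]
    · rw [Homeomorph.trans_apply, he' x fun k hk => hx k (Finset.mem_insert_of_mem hk),
        hh i x (hx i (Finset.mem_insert_self i s))]

end Support

section Segments

variable {X : Type*} [AddCommGroup X] [Module ℝ X]

theorem Seminorm.map_sub_le_map_sub_add_map_sub (p : Seminorm ℝ X) (x y z : X) :
    p (x - z) ≤ p (x - y) + p (y - z) := by
  simpa using map_add_le_add p (x - y) (y - z)

theorem add_smul_sub_ne_of_notMem_span {a a' b b' : X} (ha : a ≠ a')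
    (hb : b - b' ∉ Submodule.span ℝ {a - a'}) (t : ℝ) :
    a + t • (b - a) ≠ a' + t • (b' - a') := by
  intro h
  rcases eq_or_ne t 0 with rfl | ht
  · exact ha (by simpa using h)
  · refine hb (Submodule.mem_span_singleton.2 ⟨(t - 1) / t, smul_right_injective X ht ?_⟩)
    simp only [smul_smul, mul_div_cancel₀ _ ht]
    linear_combination (norm := module) -h

theorem add_smul_sub_ne_of_separated {q : Seminorm ℝ X} {a a' b b' : X} (hb : 2 ≤ q (b - b'))
    (ha : q (a - b) < 1) (ha' : q (a' - b') < 1) {t : ℝ} (ht : t ∈ Icc (0 : ℝ) 1) :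
    a + t • (b - a) ≠ a' + t • (b' - a') := by
  have hclose : ∀ {a b : X}, q (a - b) < 1 → q (a + t • (b - a) - b) < 1 := fun {a b} hab =>
    calc q (a + t • (b - a) - b) = (1 - t) * q (a - b) := by
          rw [show a + t • (b - a) - b = (1 - t) • (a - b) by module, map_smul_eq_mul,
            Real.norm_eq_abs, abs_of_nonneg (sub_nonneg.2 ht.2)]
      _ ≤ q (a - b) := mul_le_of_le_one_left (apply_nonneg _ _) (by linarith [ht.1])
      _ < 1 := hab
  intro h
  have : q (b - b') < 2 :=
    calc q (b - b') = q ((a' + t • (b' - a') - b') - (a + t • (b - a) - b)) := by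
          rw [h]; congr 1; abel
      _ ≤ q (a' + t • (b' - a') - b') + q (a + t • (b - a) - b) := map_sub_le_add _ _ _
      _ < 1 + 1 := add_lt_add (hclose ha') (hclose ha)
      _ = 2 := one_add_one_eq_two
  linarith

end Segments

section Perturbation

variable {X : Type*} [AddCommGroup X] [TopologicalSpace X] [IsTopologicalAddGroup X]

theorem dense_setOf_apply_sub_apply_notMem {ι : Type*} {F : Set X}
    (hF : interior F = ∅) {i j : ι} (hij : i ≠ j) : Dense {y : ι → X | y i - y j ∉ F} := by
  classical
  refine interior_eq_empty_iff_dense_compl.1 (eq_empty_of_forall_notMem fun y hy => ?_)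
  -- moving only the `i`-th coordinate stays in the set, so `F` would contain an open set
  set O := (fun x => update y i x) ⁻¹' interior {y : ι → X | y i - y j ∈ F}
  have hO : IsOpen ((fun x => x - y j) '' O) :=
    (Homeomorph.subRight (y j)).isOpenMap _
      (isOpen_interior.preimage (continuous_const.update i continuous_id :
        Continuous fun x : X => update y i x))
  have hOF : (fun x => x - y j) '' O ⊆ F := by
    rintro _ ⟨x, hx, rfl⟩
    simpa [update_of_ne hij.symm] using interior_subset hx
  have hyO : y i - y j ∈ (fun x => x - y j) '' O :=
    ⟨y i, by simpa only [O, mem_preimage, update_eq_self], rfl⟩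
  simpa [hF] using interior_maximal hOF hO hyO

theorem exists_near_pairwise_sub_notMem {ι : Type*} [Finite ι]
    {F : ι → ι → Set X} (hFc : ∀ i j, IsClosed (F i j)) (hF : ∀ i j, interior (F i j) = ∅)
    (b : ι → X) {Ω : Set X} (hΩ : Ω ∈ 𝓝 0) :
    ∃ y : ι → X, (∀ j, y j - b j ∈ Ω) ∧ ∀ i j, i ≠ j → y i - y j ∉ F i j := by
  have hdense : Dense (⋂ ij : {ij : ι × ι // ij.1 ≠ ij.2},
      {y : ι → X | y ij.1.1 - y ij.1.2 ∉ F ij.1.1 ij.1.2}) := by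
    rw [← sInter_range]
    exact (finite_range _).dense_sInter
      (forall_mem_range.2 fun ij => (hFc _ _).isOpen_compl.preimage (by fun_prop))
      (forall_mem_range.2 fun ij => dense_setOf_apply_sub_apply_notMem (hF _ _) ij.2)
  obtain ⟨y, hyΩ, hyF⟩ := hdense.inter_open_nonempty {y | ∀ j, y j - b j ∈ interior Ω}
    (by simp only [ofPred_forall]; exact isOpen_iInter_of_finite fun j =>
      isOpen_interior.preimage (by fun_prop))
    ⟨b, fun j => by simpa using mem_interior_iff_mem_nhds.2 hΩ⟩
  exact ⟨y, fun j => interior_subset (hyΩ j), fun i j hij => mem_iInter.1 hyF ⟨(i, j), hij⟩⟩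

theorem interior_span_singleton_eq_empty [Module ℝ X] [ContinuousSMul ℝ X]
    (hdim : 2 ≤ Module.rank ℝ X) (u : X) : interior (Submodule.span ℝ {u} : Set X) = ∅ := by
  by_contra h
  have hrank := rank_span_le (R := ℝ) ({u} : Set X)
  rw [Submodule.eq_top_of_nonempty_interior' _ (nonempty_iff_ne_empty.2 h), rank_top,
    Cardinal.mk_singleton] at hrank
  exact absurd (hdim.trans hrank) (by norm_num)

end Perturbation

section Bump

variable {X : Type*} [AddCommGroup X] [Module ℝ X] [TopologicalSpace X]
  [IsTopologicalAddGroup X]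

theorem continuous_of_abs_sub_le_mul_seminorm {p : Seminorm ℝ X} (hp : Continuous p)
    {f : X → ℝ} {c : ℝ} (hf : ∀ x y, |f x - f y| ≤ c * p (x - y)) : Continuous f := by
  refine continuous_iff_continuousAt.2 fun x₀ => tendsto_iff_dist_tendsto_zero.2 ?_
  have : Tendsto (fun x => c * p (x - x₀)) (𝓝 x₀) (𝓝 0) := by
    simpa using ((hp.comp (continuous_sub_right x₀)).tendsto x₀).const_mul c
  exact squeeze_zero (fun _ => dist_nonneg) (fun x => hf x x₀) this

variable [ContinuousSMul ℝ X]

theorem exists_homeomorph_add_smul {p : Seminorm ℝ X} (hp : Continuous p) {f : X → ℝ}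
    (hf : ∀ x y, |f x - f y| ≤ p (x - y)) {v : X} (hv : p v < 1) :
    ∃ h : X ≃ₜ X, ∀ x, h x = x + f x • v := by
  -- solving `x + f x • v = y` amounts to finding a fixed point of the contraction
  -- `t ↦ f (y - t • v)`
  have hcontr : ∀ y, ContractingWith ⟨p v, apply_nonneg p v⟩ fun t : ℝ => f (y - t • v) :=
    fun y => ⟨hv, LipschitzWith.of_dist_le_mul fun t s => by
      have := hf (y - t • v) (y - s • v)
      rw [sub_sub_sub_cancel_left, ← sub_smul, map_smul_eq_mul, Real.norm_eq_abs] at this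
      rw [Real.dist_eq, Real.dist_eq, abs_sub_comm t s, mul_comm]
      exact this⟩
  set g := fun y => (hcontr y).fixedPoint
  have hg : ∀ y, f (y - g y • v) = g y := fun y => (hcontr y).fixedPoint_isFixedPt
  have hg_lip : ∀ y y', |g y - g y'| ≤ (1 - p v)⁻¹ * p (y - y') := by
    intro y y'
    have h1 := hf (y - g y • v) (y' - g y' • v)
    rw [hg, hg] at h1
    have h2 : p (y - g y • v - (y' - g y' • v)) ≤ p (y - y') + |g y - g y'| * p v :=
      calc _ = p ((y - y') - (g y - g y') • v) := by congr 1; module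
        _ ≤ p (y - y') + p ((g y - g y') • v) := map_sub_le_add _ _ _
        _ = _ := by rw [map_smul_eq_mul, Real.norm_eq_abs]
    rw [le_inv_mul_iff₀ (sub_pos.2 hv)]
    nlinarith
  refine ⟨{ toFun := fun x => x + f x • v
            invFun := fun y => y - g y • v
            left_inv := fun x => ?_
            right_inv := fun y => by simp only [hg, sub_add_cancel]
            continuous_toFun := continuous_id.add
              ((continuous_of_abs_sub_le_mul_seminorm hp (c := 1) (by simpa using hf)).smul
                continuous_const)
            continuous_invFun := continuous_id.sub
              ((continuous_of_abs_sub_le_mul_seminorm hp hg_lip).smul continuous_const) },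
    fun _ => rfl⟩
  have : f (x + f x • v - f x • v) = f x := by rw [add_sub_cancel_right]
  simp only [← (hcontr _).fixedPoint_unique this, add_sub_cancel_right, g]

theorem exists_bump_homeomorph {q : Seminorm ℝ X} (hq : Continuous q) (a : X) {w : X}
    (hw : q w < 1) :
    ∃ h : X ≃ₜ X, h a = a + w ∧ (∀ x ∉ q.ball a 1, h x = x) ∧
      ∀ x, ∃ t ∈ Icc (0 : ℝ) 1, h x = x + t • w := by
  have hf : ∀ x y, |max (1 - q (x - a)) 0 - max (1 - q (y - a)) 0| ≤ q (x - y) := fun x y =>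
    calc _ ≤ |(1 - q (x - a)) - (1 - q (y - a))| := abs_max_sub_max_le_abs _ _ _
      _ = ‖q (y - a) - q (x - a)‖ := by rw [Real.norm_eq_abs]; ring_nf
      _ ≤ q ((y - a) - (x - a)) := q.norm_sub_map_le_sub _ _
      _ = q (x - y) := by rw [sub_sub_sub_cancel_right, ← map_neg_eq_map, neg_sub]
  obtain ⟨h, hh⟩ := exists_homeomorph_add_smul hq hf hw
  refine ⟨h, by simp [hh], fun x hx => ?_,
    fun x => ⟨_, ⟨le_max_right _ _, max_le ?_ zero_le_one⟩, hh x⟩⟩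
  · rw [Seminorm.mem_ball, not_lt] at hx
    simp [hh, hx]
  · linarith [apply_nonneg q (x - a)]

theorem exists_homeomorph_add_of_separated {ι : Type*} [Finite ι] {q : Seminorm ℝ X}
    (hq : Continuous q) {C : Set X} {z w : ι → X} (hw : ∀ j, q (w j) < 1)
    (hzC : ∀ j, q.ball (z j) 1 ⊆ C) (hz : Pairwise fun i j => 2 ≤ q (z i - z j)) :
    ∃ e : X ≃ₜ X, (∀ x, x ∈ C ↔ e x ∈ C) ∧ (∀ j, e (z j) = z j + w j) ∧
      ∀ (p : Seminorm ℝ X) (r : ℝ), 0 ≤ r → (∀ j, p (w j) ≤ r) → ∀ x, p (e x - x) ≤ r := by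
  choose h hcenter hsupp hdisp using fun j => exists_bump_homeomorph hq (z j) (hw j)
  have hdisj : Pairwise (Disjoint on fun j => q.ball (z j) 1) := fun i j hij =>
    disjoint_left.2 fun x hi hj => (hz hij).not_gt <|
      calc q (z i - z j) = q ((x - z j) - (x - z i)) := by congr 1; abel
        _ ≤ q (x - z j) + q (x - z i) := map_sub_le_add _ _ _
        _ < 1 + 1 := add_lt_add hj hi
        _ = 2 := one_add_one_eq_two
  obtain ⟨e, heq, hfix⟩ := Homeomorph.exists_eq_on_of_pairwise_disjoint h hdisj hsupp
  have hoff : ∀ x ∉ ⋃ j, q.ball (z j) 1, e x = x := fun x hx =>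
    hfix x fun j hj => hx (mem_iUnion_of_mem j hj)
  refine ⟨e, mem_iff_apply_mem_of_forall_notMem_eq e.injective hoff (iUnion_subset hzC),
    fun j => ?_, fun p r hr hpr x => ?_⟩
  · rw [heq j _ (q.mem_ball_self one_pos), hcenter]
  · by_cases hx : ∃ j, x ∈ q.ball (z j) 1
    · obtain ⟨j, hj⟩ := hx
      obtain ⟨t, ht, hxt⟩ := hdisp j x
      rw [heq j x hj, hxt, add_sub_cancel_left, map_smul_eq_mul, Real.norm_eq_abs,
        abs_of_nonneg ht.1]
      exact (mul_le_of_le_one_left (apply_nonneg _ _) ht.2).trans (hpr j)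
    · rw [hfix x (not_exists.1 hx), sub_self, map_zero]
      exact hr

theorem exists_homeomorph_along_segments_of_seminorm {ι : Type*} [Finite ι] {C : Set X}
    {q : Seminorm ℝ X} (hq : Continuous q) {z w : ι → X}
    (hqC : ∀ j, ∀ t ∈ Icc (0 : ℝ) 1, q.ball (z j + t • (w j - z j)) 1 ⊆ C)
    (hqz : ∀ i j, i ≠ j → ∀ t ∈ Icc (0 : ℝ) 1,
      2 ≤ q (z i + t • (w i - z i) - (z j + t • (w j - z j)))) :
    ∃ e : X ≃ₜ X, (∀ x, x ∈ C ↔ e x ∈ C) ∧ (∀ j, e (z j) = w j) ∧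
      ∀ (p : Seminorm ℝ X) (r : ℝ), 0 ≤ r → (∀ j, p (w j - z j) ≤ r) → ∀ x, p (e x - x) ≤ r := by
  obtain ⟨T, hT, hTq⟩ : ∃ T : ℕ, 0 < T ∧ ∀ j, q (w j - z j) < T :=
    ((eventually_gt_atTop 0).and (eventually_all.2 fun j =>
      tendsto_natCast_atTop_atTop.eventually_gt_atTop _)).exists
  have hT' : (0 : ℝ) < T := Nat.cast_pos.2 hT
  have hsmul : ∀ (p : Seminorm ℝ X) (v : X), p ((T : ℝ)⁻¹ • v) = (T : ℝ)⁻¹ * p v := fun p v => by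
    rw [map_smul_eq_mul, Real.norm_eq_abs, abs_of_pos (inv_pos.2 hT')]
  have key : ∀ m ≤ T, ∃ e : X ≃ₜ X, (∀ x, x ∈ C ↔ e x ∈ C) ∧
      (∀ j, e (z j) = z j + (m / T : ℝ) • (w j - z j)) ∧
      ∀ (p : Seminorm ℝ X) (r : ℝ), 0 ≤ r → (∀ j, p (w j - z j) ≤ r) →
        ∀ x, p (e x - x) ≤ m / T * r := by
    intro m hm
    induction m with
    | zero => exact ⟨Homeomorph.refl X, fun _ => Iff.rfl, by simp, by simp⟩
    | succ m ih =>
      obtain ⟨e, heC, hez, hep⟩ := ih (Nat.le_of_succ_le hm)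
      have ht : (m : ℝ) / T ∈ Icc (0 : ℝ) 1 :=
        ⟨by positivity, div_le_one_of_le₀ (by exact_mod_cast Nat.le_of_succ_le hm) hT'.le⟩
      obtain ⟨e', he'C, he'z, he'p⟩ := exists_homeomorph_add_of_separated hq
        (z := fun j => z j + (m / T : ℝ) • (w j - z j)) (w := fun j => (T : ℝ)⁻¹ • (w j - z j))
        (fun j => by rw [hsmul, inv_mul_lt_one₀ hT']; exact hTq j)
        (fun j => hqC j _ ht) (fun i j hij => hqz i j hij _ ht)
      refine ⟨e.trans e', fun x => (heC x).trans (he'C _), fun j => ?_, fun p r hr hpr x => ?_⟩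
      · rw [Homeomorph.trans_apply, hez, he'z]
        push_cast
        rw [add_div, add_smul, one_div, add_assoc]
      · calc p (e' (e x) - x) ≤ p (e' (e x) - e x) + p (e x - x) :=
              p.map_sub_le_map_sub_add_map_sub _ _ _
          _ ≤ (T : ℝ)⁻¹ * r + m / T * r :=
              add_le_add (he'p p _ (by positivity) (fun j => by
                rw [hsmul]; exact mul_le_mul_of_nonneg_left (hpr j) (by positivity)) _)
                (hep p r hr hpr x)
          _ = (m + 1 : ℕ) / T * r := by push_cast; ring
  obtain ⟨e, heC, hez, hep⟩ := key T le_rfl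
  refine ⟨e, heC, fun j => by simp [hez, div_self hT'.ne'], fun p r hr hpr x => ?_⟩
  simpa [div_self hT'.ne'] using hep p r hr hpr x

end Bump

section LocallyConvex

variable {X : Type*} [AddCommGroup X] [Module ℝ X] [TopologicalSpace X]
  [IsTopologicalAddGroup X] [ContinuousSMul ℝ X] [LocallyConvexSpace ℝ X]

theorem exists_continuous_seminorm_ball_subset {U : Set X} (hU : U ∈ 𝓝 0) {r : ℝ} (hr : 0 < r) :
    ∃ p : Seminorm ℝ X, Continuous p ∧ p.ball 0 r ⊆ U := by
  have hX := PolynormableSpace.withSeminorms ℝ X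
  obtain ⟨s, ρ, hρ, hsU⟩ := (hX.mem_nhds_iff 0 U).1 hU
  set c : NNReal := ⟨r / ρ, (div_pos hr hρ).le⟩
  have hball : (c • s.sup fun p => p.1).ball 0 r = (s.sup fun p => p.1).ball 0 ρ := by
    rw [Seminorm.ball_smul _ (show 0 < c from NNReal.coe_pos.1 (div_pos hr hρ))]
    exact congrArg _ (div_div_cancel₀ hr.ne')
  refine ⟨c • s.sup fun p => p.1, Seminorm.continuous (r := r) ?_, hball ▸ hsU⟩
  rw [hball]
  exact hX.hasBasis_zero_ball.mem_of_mem (i := (s, ρ)) hρ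

theorem exists_continuous_seminorm_of_isCompact [T2Space X] {C Γ K : Set X} (hC : IsOpen C)
    (hΓ : IsCompact Γ) (hΓC : Γ ⊆ C) (hK : IsCompact K) (hK0 : (0 : X) ∉ K) :
    ∃ q : Seminorm ℝ X, Continuous q ∧ (∀ x ∈ Γ, q.ball x 1 ⊆ C) ∧ ∀ y ∈ K, 2 ≤ q y := by
  obtain ⟨O, hO, hΓO⟩ := compact_open_separated_add_right hΓ hC hΓC
  obtain ⟨q, hq, hqO⟩ := exists_continuous_seminorm_ball_subset
    (inter_mem hO (hK.isClosed.isOpen_compl.mem_nhds hK0)) two_pos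
  refine ⟨q, hq, fun x hx y hy => hΓO ?_,
    fun y hy => not_lt.1 fun h => absurd hy (hqO (q.mem_ball_zero.2 h)).2⟩
  have hyx : y - x ∈ O :=
    (hqO (q.ball_mono one_le_two (q.mem_ball_zero.2 ((q.mem_ball).1 hy)))).1
  simpa using add_mem_add hx hyx

theorem exists_homeomorph_along_segments [T2Space X] {ι : Type*} [Finite ι] {C : Set X}
    (hC : IsOpen C) {z w : ι → X} (hzw : ∀ j, segment ℝ (z j) (w j) ⊆ C)
    (hcoll : ∀ i j, i ≠ j → ∀ t ∈ Icc (0 : ℝ) 1, z i + t • (w i - z i) ≠ z j + t • (w j - z j)) :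
    ∃ e : X ≃ₜ X, (∀ x, x ∈ C ↔ e x ∈ C) ∧ (∀ j, e (z j) = w j) ∧
      ∀ (p : Seminorm ℝ X) (r : ℝ), 0 ≤ r → (∀ j, p (w j - z j) ≤ r) → ∀ x, p (e x - x) ≤ r := by
  have hγ : ∀ j, Continuous fun t : ℝ => z j + t • (w j - z j) := fun j => by fun_prop
  obtain ⟨q, hq, hqC, hqK⟩ := exists_continuous_seminorm_of_isCompact hC
    (isCompact_iUnion fun j => segment_eq_image' ℝ (z j) (w j) ▸ isCompact_Icc.image (hγ j))
    (iUnion_subset hzw)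
    (isCompact_iUnion fun ij : {ij : ι × ι // ij.1 ≠ ij.2} =>
      isCompact_Icc.image ((hγ ij.1.1).sub (hγ ij.1.2)))
    (by
      simp only [mem_iUnion, mem_image, not_exists, not_and]
      exact fun ij t ht h => hcoll _ _ ij.2 t ht (sub_eq_zero.1 h))
  exact exists_homeomorph_along_segments_of_seminorm hq
    (fun j t ht => hqC _ (mem_iUnion_of_mem j
      (segment_eq_image' ℝ (z j) (w j) ▸ mem_image_of_mem _ ht)))
    (fun i j hij t ht => hqK _ (mem_iUnion_of_mem ⟨(i, j), hij⟩ (mem_image_of_mem _ ht)))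

theorem exists_homeomorph_of_near [T2Space X] {ι : Type*} [Finite ι] {C : Set X}
    (hC : IsOpen C) {q : Seminorm ℝ X} {b y : ι → X} (hbC : ∀ j, q.ball (b j) 1 ⊆ C)
    (hb : Pairwise fun i j => 2 ≤ q (b i - b j)) (hy : ∀ j, q (y j - b j) < 1) :
    ∃ e : X ≃ₜ X, (∀ x, x ∈ C ↔ e x ∈ C) ∧ (∀ j, e (y j) = b j) ∧
      ∀ (p : Seminorm ℝ X) (r : ℝ), 0 ≤ r → (∀ j, p (b j - y j) ≤ r) → ∀ x, p (e x - x) ≤ r :=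
  exists_homeomorph_along_segments hC
    (fun j => ((q.convex_ball _ _).segment_subset (q.mem_ball.2 (hy j))
      (q.mem_ball_self one_pos)).trans (hbC j))
    (fun i j hij _ ht => add_smul_sub_ne_of_separated (hb hij) (hy i) (hy j) ht)

theorem exists_homeomorph_of_injective [T2Space X] (hdim : 2 ≤ Module.rank ℝ X) {C : Set X}
    (hC : IsOpen C) (hconv : Convex ℝ C) {ι : Type*} [Finite ι] {a b : ι → X}
    (ha : Injective a) (hb : Injective b) (haC : ∀ j, a j ∈ C) (hbC : ∀ j, b j ∈ C)
    {p : Seminorm ℝ X} (hp : Continuous p) {r : ℝ} (hr : 0 < r)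
    (hab : ∀ j, p (b j - a j) ≤ r) :
    ∃ e : X ≃ₜ X, (∀ x, x ∈ C ↔ e x ∈ C) ∧ (∀ j, e (a j) = b j) ∧ ∀ x, p (e x - x) ≤ 3 * r := by
  obtain ⟨q, hq, hqC, hqb⟩ := exists_continuous_seminorm_of_isCompact hC
    (finite_range b).isCompact (range_subset_iff.2 hbC)
    (finite_range fun ij : {ij : ι × ι // ij.1 ≠ ij.2} => b ij.1.1 - b ij.1.2).isCompact
    (by rintro ⟨ij, h⟩; exact ij.2 (hb (sub_eq_zero.1 h)))
  -- perturb the targets so that no two segments from the `a j` meet at equal times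
  obtain ⟨y, hyb, hya⟩ := exists_near_pairwise_sub_notMem
    (F := fun i j => Submodule.span ℝ {a i - a j})
    (fun _ _ => Submodule.closed_of_finiteDimensional _)
    (fun _ _ => interior_span_singleton_eq_empty hdim _) b
    (inter_mem ((Seminorm.continuous_iff hr).1 hp) ((Seminorm.continuous_iff one_pos).1 hq))
  have hyp : ∀ j, p (y j - b j) < r := fun j => p.mem_ball_zero.1 (hyb j).1
  have hyq : ∀ j, q (y j - b j) < 1 := fun j => q.mem_ball_zero.1 (hyb j).2
  obtain ⟨e₁, he₁C, he₁, he₁p⟩ := exists_homeomorph_along_segments hC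
    (fun j => hconv.segment_subset (haC j) (hqC _ (mem_range_self j) (q.mem_ball.2 (hyq j))))
    (fun i j hij t _ => add_smul_sub_ne_of_notMem_span (ha.ne hij) (hya i j hij) t)
  obtain ⟨e₂, he₂C, he₂, he₂p⟩ := exists_homeomorph_of_near hC
    (fun j => hqC _ (mem_range_self j)) (fun i j hij => hqb _ ⟨⟨(i, j), hij⟩, rfl⟩) hyq
  refine ⟨e₁.trans e₂, fun x => (he₁C x).trans (he₂C _), fun j => by simp [he₁, he₂],
    fun x => ?_⟩
  calc p (e₂ (e₁ x) - x) ≤ p (e₂ (e₁ x) - e₁ x) + p (e₁ x - x) :=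
        p.map_sub_le_map_sub_add_map_sub _ _ _
    _ ≤ r + 2 * r := by
        refine add_le_add (he₂p p r hr.le (fun j => ?_) _)
          (he₁p p _ (by positivity) (fun j => ?_) _)
        · rw [← map_neg_eq_map, neg_sub]
          exact (hyp j).le
        · linarith [p.map_sub_le_map_sub_add_map_sub (y j) (b j) (a j), hyp j, hab j]
    _ = 3 * r := by ring

end LocallyConvex

section Uniform

variable {X : Type*} [AddCommGroup X] [Module ℝ X] [UniformSpace X] [IsUniformAddGroup X]

theorem setOf_seminorm_sub_lt_mem_uniformity {p : Seminorm ℝ X} (hp : Continuous p) {r : ℝ}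
    (hr : 0 < r) (C : Set X) : {xy : C × C | p ((xy.2 : X) - xy.1) < r} ∈ 𝓤 C := by
  rw [uniformity_setCoe, uniformity_eq_comap_nhds_zero]
  have : {x : X | p x < r} ∈ 𝓝 0 :=
    hp.continuousAt.preimage_mem_nhds (by rw [map_zero]; exact Iio_mem_nhds hr)
  exact preimage_mem_comap (preimage_mem_comap this)

theorem exists_seminorm_of_mem_uniformity [ContinuousSMul ℝ X] [LocallyConvexSpace ℝ X]
    {C : Set X} {V : Set (C × C)} (hV : V ∈ 𝓤 C) :
    ∃ p : Seminorm ℝ X, Continuous p ∧ ∀ x y : C, p ((y : X) - x) < 1 → (x, y) ∈ V := by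
  rw [uniformity_setCoe, uniformity_eq_comap_nhds_zero, comap_comap, mem_comap] at hV
  obtain ⟨U, hU, hUV⟩ := hV
  obtain ⟨p, hp, hpU⟩ := exists_continuous_seminorm_ball_subset hU one_pos
  exact ⟨p, hp, fun x y h => hUV (hpU (p.mem_ball_zero.2 h))⟩

end Uniform

theorem isOpen_convex_propertyP_general
    {X : Type*} [AddCommGroup X] [Module ℝ X]
    [UniformSpace X] [IsUniformAddGroup X] [ContinuousSMul ℝ X]
    [LocallyConvexSpace ℝ X] [T2Space X]
    (hdim : 2 ≤ Module.rank ℝ X)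
    (C : Set X) (hC : IsOpen C) (hconv : Convex ℝ C) :
    PropertyP C := by
  intro V hV
  obtain ⟨p, hp, hpV⟩ := exists_seminorm_of_mem_uniformity hV
  refine ⟨_, setOf_seminorm_sub_lt_mem_uniformity hp (by norm_num : (0 : ℝ) < 1 / 4) C, ?_⟩
  intro k _ a b ha hb hab
  obtain ⟨e, heC, hea, hep⟩ := exists_homeomorph_of_injective hdim hC hconv
    (Subtype.val_injective.comp ha) (Subtype.val_injective.comp hb) (fun j => (a j).2)
    (fun j => (b j).2) hp (by norm_num : (0 : ℝ) < 1 / 4) fun j => (hab j).le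
  exact ⟨e.subtype heC, fun j => Subtype.ext (hea j),
    fun x => hpV _ _ ((hep x).trans_lt (by norm_num))⟩

/-- Every open convex set in a locally convex space of real dimension at least two, equipped
with the uniformity induced from the space, has property (P). -/
theorem isOpen_convex_propertyP
    {𝕂 : Type*} [RCLike 𝕂] {X : Type*} [AddCommGroup X] [Module 𝕂 X]
    [Module ℝ X] [IsScalarTower ℝ 𝕂 X]
    [UniformSpace X] [IsUniformAddGroup X] [ContinuousSMul 𝕂 X] [ContinuousSMul ℝ X]
    [LocallyConvexSpace ℝ X] [T2Space X]
    (hdim : 2 ≤ Module.rank ℝ X)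
    (C : Set X) (hC : IsOpen C) (hconv : Convex ℝ C) :
    PropertyP C :=
  isOpen_convex_propertyP_general hdim C hC hconv
end
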